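/- arXiv:1206.2656 — 8 statements merged into one kernel-verified Lean document; each statement's English description precedes it below -/
import Mathlib

section
/- Let n be an even positive integer and let Sₙ = {e₁,…,eₙ} be the standard basis of F₂ⁿ. The adjacency matrix M of the Cayley graph of (F₂ⁿ, Sₙ) (the n-dimensional hypercube) has rank 2^{n−1} over F₂. -/
open Finset

namespace Stmt3Aux

variable {n : ℕ}

/-- standard basis vector -/
def e (i : Fin n) : Fin n → ZMod 2 := Pi.single i 1

/-- the homotopy matrix entries -/
def Kf (i0 : Fin n) (x y : Fin n → ZMod 2) : ZMod 2 :=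
  if x i0 = 0 ∧ y = x + e i0 then 1 else 0

lemma zmod2_cases (a : ZMod 2) : a = 0 ∨ a = 1 := by revert a; decide

lemma zmod2_ne_iff {a b : ZMod 2} : a ≠ b ↔ a = b + 1 := by revert a b; decide

lemma vec_add_self (x : Fin n → ZMod 2) : x + x = 0 := by
  funext j; exact CharTwo.add_self_eq_zero (x j)

lemma add_cancel_iff {x y w : Fin n → ZMod 2} : y + w = x + w ↔ y = x := by
  constructor
  · intro h
    have := congrArg (fun u => u + w) h
    simpa [add_assoc, vec_add_self] using this
  · rintro rfl; rfl

lemma e_apply_self (i : Fin n) : e i i = 1 := Pi.single_eq_same i 1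

lemma add_e_eq_iff {z w u : Fin n → ZMod 2} : z = w + u ↔ z + u = w := by
  constructor
  · rintro rfl; rw [add_assoc, vec_add_self, add_zero]
  · rintro rfl; rw [add_assoc, vec_add_self, add_zero]

lemma e_apply_ne {i j : Fin n} (h : j ≠ i) : e i j = 0 := Pi.single_eq_of_ne h 1

lemma e_inj {i j : Fin n} (h : e i = e j) : i = j := by
  by_contra hne
  have := congrFun h i
  rw [e_apply_self, e_apply_ne hne] at this
  exact one_ne_zero this

lemma dist_add_e (x : Fin n → ZMod 2) (i : Fin n) : hammingDist x (x + e i) = 1 := by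
  show #{j | x j ≠ (x + e i) j} = 1
  have : Finset.filter (fun j => x j ≠ (x + e i) j) Finset.univ = ({i} : Finset (Fin n)) := by
    ext j
    simp only [mem_filter, mem_univ, true_and, mem_singleton, Pi.add_apply]
    constructor
    · intro h
      by_contra hne
      exact h (by rw [e_apply_ne hne, add_zero])
    · rintro rfl
      rw [e_apply_self]
      intro h
      exact one_ne_zero (left_eq_add.mp h)
  rw [this, card_singleton]

lemma dist_one_iff {x y : Fin n → ZMod 2} :
    hammingDist x y = 1 ↔ ∃ i, y = x + e i := by
  constructor
  · intro h
    obtain ⟨i, hi⟩ := card_eq_one.mp h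
    refine ⟨i, funext fun j => ?_⟩
    by_cases hj : j = i
    · subst hj
      have hji : j ∈ ({j} : Finset (Fin n)) := mem_singleton_self j
      rw [← hi, mem_filter] at hji
      rw [Pi.add_apply, e_apply_self]
      exact zmod2_ne_iff.mp (Ne.symm hji.2)
    · have hji : j ∉ ({i} : Finset (Fin n)) := by simpa using hj
      rw [← hi, mem_filter] at hji
      push_neg at hji
      have := hji (mem_univ j)
      rw [Pi.add_apply, e_apply_ne hj, add_zero]
      exact this.symm
  · rintro ⟨i, rfl⟩
    exact dist_add_e x i

/-- the key rewriting of matrix entries as indicator sums -/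
lemma entry_eq_sum (x y : Fin n → ZMod 2) :
    (if hammingDist x y = 1 then (1 : ZMod 2) else 0)
      = ∑ i : Fin n, if y = x + e i then 1 else 0 := by
  by_cases h : hammingDist x y = 1
  · obtain ⟨i0, rfl⟩ := dist_one_iff.mp h
    rw [if_pos h]
    have key : ∀ i : Fin n, (if x + e i0 = x + e i then (1 : ZMod 2) else 0)
        = if i0 = i then 1 else 0 := by
      intro i
      apply if_congr _ rfl rfl
      exact ⟨fun hh => e_inj (add_left_cancel hh), fun hh => by rw [hh]⟩
    rw [Finset.sum_congr rfl fun i _ => key i, Finset.sum_ite_eq]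
    simp
  · rw [if_neg h]
    symm
    apply Finset.sum_eq_zero
    intro i _
    rw [if_neg]
    rintro rfl
    exact h (dist_add_e x i)

/-- the square of the indicator sum vanishes for even n -/
lemma square_zero (hn : Even n) (x z : Fin n → ZMod 2) :
    (∑ i : Fin n, ∑ j : Fin n, if z = x + e i + e j then (1 : ZMod 2) else 0) = 0 := by
  rw [← Finset.sum_product']
  rw [← Finset.diag_union_offDiag (Finset.univ : Finset (Fin n)),
    Finset.sum_union (Finset.disjoint_diag_offDiag _)]
  have h1 : (∑ p ∈ (Finset.univ : Finset (Fin n)).diag,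
      if z = x + e p.1 + e p.2 then (1 : ZMod 2) else 0) = 0 := by
    rw [Finset.sum_diag]
    have key : ∀ i : Fin n, (if z = x + e i + e i then (1 : ZMod 2) else 0)
        = if z = x then 1 else 0 := by
      intro i
      apply if_congr _ rfl rfl
      rw [add_assoc, vec_add_self, add_zero]
    rw [Finset.sum_congr rfl fun i _ => key i, Finset.sum_const, Finset.card_univ,
      Fintype.card_fin]
    have hcast : (n : ZMod 2) = 0 := (ZMod.natCast_eq_zero_iff n 2).mpr hn.two_dvd
    rw [nsmul_eq_mul, hcast, zero_mul]
  have h2 : (∑ p ∈ (Finset.univ : Finset (Fin n)).offDiag,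
      if z = x + e p.1 + e p.2 then (1 : ZMod 2) else 0) = 0 := by
    apply Finset.sum_involution (fun p _ => (p.2, p.1))
    · intro p _
      have : (if z = x + e p.1 + e p.2 then (1 : ZMod 2) else 0)
          = if z = x + e p.2 + e p.1 then 1 else 0 := by
        apply if_congr _ rfl rfl
        rw [add_assoc, add_assoc, add_comm (e p.1)]
      rw [this]
      exact CharTwo.add_self_eq_zero _
    · intro p hp _
      have := (Finset.mem_offDiag.mp hp).2.2
      exact fun hcon => this (congrArg Prod.snd hcon)
    · intro p hp
      have h := Finset.mem_offDiag.mp hp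
      exact Finset.mem_offDiag.mpr ⟨h.2.1, h.1, fun hc => h.2.2 hc.symm⟩
    · intro p _; rfl
  rw [h1, h2, add_zero]

lemma one_ne_zero' : (1 : ZMod 2) ≠ 0 := by decide

/-- the homotopy identity, pointwise -/
lemma homotopy (i0 : Fin n) (x z : Fin n → ZMod 2) :
    (∑ i : Fin n, Kf i0 (x + e i) z) + (∑ i : Fin n, Kf i0 x (z + e i))
      = if x = z then 1 else 0 := by
  rw [← Finset.sum_add_distrib]
  rw [Finset.sum_eq_single i0]
  · -- i = i0 term
    unfold Kf
    have hx1 : (x + e i0) i0 = x i0 + 1 := by rw [Pi.add_apply, e_apply_self]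
    have hc1 : ((x + e i0) i0 = 0 ∧ z = (x + e i0) + e i0) ↔ (x i0 = 1 ∧ z = x) := by
      rw [hx1, add_assoc, vec_add_self, add_zero]
      apply and_congr _ Iff.rfl
      constructor
      · intro h
        rcases zmod2_cases (x i0) with h0 | h0
        · exfalso; rw [h0, zero_add] at h; exact one_ne_zero' h
        · exact h0
      · intro h; rw [h]; decide
    have hc2 : (x i0 = 0 ∧ z + e i0 = x + e i0) ↔ (x i0 = 0 ∧ z = x) :=
      and_congr Iff.rfl add_cancel_iff
    rw [if_congr hc1 rfl rfl, if_congr hc2 rfl rfl]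
    by_cases hxz : x = z
    · subst hxz
      rw [if_pos rfl]
      rcases zmod2_cases (x i0) with h0 | h0
      · rw [if_neg (fun hc => absurd hc.1 (by rw [h0]; decide)), if_pos ⟨h0, rfl⟩, zero_add]
      · rw [if_pos ⟨h0, rfl⟩, if_neg (fun hc => absurd hc.1 (by rw [h0]; decide)), add_zero]
    · rw [if_neg hxz, if_neg (fun hc => hxz hc.2.symm), if_neg (fun hc => hxz hc.2.symm),
        add_zero]
  · -- i ≠ i0 terms vanish
    intro i _ hi
    unfold Kf
    have hx0 : (x + e i) i0 = x i0 := by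
      rw [Pi.add_apply, e_apply_ne (Ne.symm hi), add_zero]
    have hcond : ((x + e i) i0 = 0 ∧ z = (x + e i) + e i0)
        ↔ (x i0 = 0 ∧ z + e i = x + e i0) := by
      rw [hx0]
      apply and_congr Iff.rfl
      rw [add_right_comm x (e i) (e i0)]
      exact add_e_eq_iff
    rw [if_congr hcond rfl rfl]
    exact CharTwo.add_self_eq_zero _
  · intro h; exact absurd (Finset.mem_univ i0) h

end Stmt3Aux

/-- for even positive `n`, the adjacency matrix of the `n`-dimensional
hypercube Cayley graph of `(F₂ⁿ, Sₙ)` has rank `2^(n-1)` over `F₂`. -/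
theorem stmt3 (n : ℕ) (hn : Even n) (hpos : 0 < n)
    (M : Matrix (Fin n → ZMod 2) (Fin n → ZMod 2) (ZMod 2))
    (hM : ∀ x y, M x y = if hammingDist x y = 1 then 1 else 0) :
    M.rank = 2 ^ (n - 1) := by
  classical
  open Stmt3Aux in
  have hM' : ∀ x y, M x y = ∑ i : Fin n, if y = x + Stmt3Aux.e i then 1 else 0 := by
    intro x y; rw [hM x y, Stmt3Aux.entry_eq_sum]
  set i0 : Fin n := ⟨0, hpos⟩ with hi0
  set K : Matrix (Fin n → ZMod 2) (Fin n → ZMod 2) (ZMod 2) :=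
    fun x y => Stmt3Aux.Kf i0 x y with hKdef
  -- row/column sums against M
  have row_sum : ∀ (x : Fin n → ZMod 2) (v : (Fin n → ZMod 2) → ZMod 2),
      (∑ y, M x y * v y) = ∑ i : Fin n, v (x + Stmt3Aux.e i) := by
    intro x v
    simp_rw [hM', Finset.sum_mul, ite_mul, one_mul, zero_mul]
    rw [Finset.sum_comm]
    refine Finset.sum_congr rfl fun i _ => ?_
    rw [Finset.sum_ite_eq' Finset.univ (x + Stmt3Aux.e i) v, if_pos (Finset.mem_univ _)]
  have col_sum : ∀ (z : Fin n → ZMod 2) (v : (Fin n → ZMod 2) → ZMod 2),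
      (∑ y, v y * M y z) = ∑ i : Fin n, v (z + Stmt3Aux.e i) := by
    intro z v
    have key : ∀ (y : Fin n → ZMod 2) (i : Fin n), (z = y + Stmt3Aux.e i) ↔ (y = z + Stmt3Aux.e i) := by
      intro y i
      constructor
      · rintro rfl; rw [add_assoc, Stmt3Aux.vec_add_self, add_zero]
      · rintro rfl; rw [add_assoc, Stmt3Aux.vec_add_self, add_zero]
    simp_rw [hM', Finset.mul_sum, mul_ite, mul_one, mul_zero]
    rw [Finset.sum_comm]
    refine Finset.sum_congr rfl fun i _ => ?_
    rw [Finset.sum_congr rfl fun y _ => by rw [if_congr (key y i) rfl rfl],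
      Finset.sum_ite_eq' Finset.univ (z + Stmt3Aux.e i) v, if_pos (Finset.mem_univ _)]
  -- M * M = 0
  have hMM : M * M = 0 := by
    ext x z
    rw [Matrix.mul_apply, Matrix.zero_apply, row_sum x (fun y => M y z)]
    simp_rw [hM']
    exact Stmt3Aux.square_zero hn x z
  -- M * K + K * M = 1
  have hMK : M * K + K * M = 1 := by
    ext x z
    rw [Matrix.add_apply, Matrix.mul_apply, Matrix.mul_apply,
      row_sum x (fun y => K y z), col_sum z (fun y => K x y), Matrix.one_apply]
    exact Stmt3Aux.homotopy i0 x z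
  -- range = kernel
  have hrange_ker : LinearMap.range M.mulVecLin = LinearMap.ker M.mulVecLin := by
    apply le_antisymm
    · rintro w ⟨v, rfl⟩
      rw [LinearMap.mem_ker, Matrix.mulVecLin_apply, Matrix.mulVecLin_apply,
        Matrix.mulVec_mulVec, hMM, Matrix.zero_mulVec]
    · intro v hv
      rw [LinearMap.mem_ker, Matrix.mulVecLin_apply] at hv
      refine ⟨K.mulVec v, ?_⟩
      rw [Matrix.mulVecLin_apply, Matrix.mulVec_mulVec]
      have h1 : (M * K + K * M).mulVec v = v := by rw [hMK, Matrix.one_mulVec]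
      rw [Matrix.add_mulVec, ← Matrix.mulVec_mulVec, ← Matrix.mulVec_mulVec, hv,
        Matrix.mulVec_zero, add_zero] at h1
      rw [← Matrix.mulVec_mulVec]
      exact h1
  -- rank-nullity
  have hdim : Module.finrank (ZMod 2) ((Fin n → ZMod 2) → ZMod 2) = 2 ^ n := by
    rw [Module.finrank_pi (ZMod 2)]
    rw [Fintype.card_fun, ZMod.card, Fintype.card_fin]
  have hrn := LinearMap.finrank_range_add_finrank_ker M.mulVecLin
  rw [← hrange_ker, hdim] at hrn
  have hrank : M.rank = Module.finrank (ZMod 2) (LinearMap.range M.mulVecLin) := rfl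
  have hpow : 2 ^ n = 2 * 2 ^ (n - 1) := by
    conv_lhs => rw [show n = (n - 1) + 1 from (Nat.succ_pred_eq_of_pos hpos).symm]
    rw [pow_succ]
    ring
  rw [hrank]
  omega
end

section
/- For even n, the adjacency matrix M of the hypercube Cayley graph of (F₂ⁿ, Sₙ) is self-dual: M·Mᵀ = 0 over F₂ and rank(M) = 2^{n−1}, hence the row space of M equals its own orthogonal complement in F₂^{2ⁿ}. -/
/-!
Write `T a` for the matrix of translation by `a` on `F₂ⁿ`. The hypercube matrix is
`M = ∑ⱼ T eⱼ`, a sum of commuting involutions, so in characteristic two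
`M² = ∑ⱼ (T eⱼ)² = n • 1`, which vanishes for even `n`. For a fixed coordinate `i`,
`H = diag(x ↦ xᵢ) · T eᵢ` is a contracting homotopy, `M H + H M = 1`, so the complex
`M` is exact: `range M = ker M`, which forces `rank M = 2ⁿ / 2`. As `M` is symmetric, its
row space is its column space `range M = ker M`, i.e. the orthogonal complement of the rows.
-/

open Matrix

theorem sum_pow_char_of_commute {R ι : Type*} [Ring R] {p : ℕ} [Fact p.Prime] [CharP R p]
    (s : Finset ι) (f : ι → R) (hf : ∀ i j, Commute (f i) (f j)) :
    (∑ i ∈ s, f i) ^ p = ∑ i ∈ s, f i ^ p := by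
  induction s using Finset.cons_induction with
  | empty => simp [(Fact.out : p.Prime).ne_zero]
  | cons a s ha ih =>
    rw [Finset.sum_cons, Finset.sum_cons,
      add_pow_char_of_commute _ (Commute.sum_right _ _ _ fun i _ => hf a i), ih]

theorem hammingNorm_eq_one_iff {ι : Type*} [Fintype ι] [DecidableEq ι] {u : ι → ZMod 2} :
    hammingNorm u = 1 ↔ ∃ j, u = Pi.single j 1 := by
  simp only [hammingNorm, Finset.card_eq_one, Finset.ext_iff, Finset.mem_filter, Finset.mem_univ,
    true_and, Finset.mem_singleton, funext_iff, Pi.single_apply]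
  refine exists_congr fun j => forall_congr' fun i => ?_
  obtain h | h : u i = 0 ∨ u i = 1 := by generalize u i = a; revert a; decide
  all_goals rcases eq_or_ne i j with rfl | hij <;> simp_all

namespace Matrix

variable {ι R : Type*} [Fintype ι]

theorem range_mulVecLin_eq_ker_of_homotopy [DecidableEq ι] [CommRing R] {A H : Matrix ι ι R}
    (hA : A * A = 0) (hH : A * H + H * A = 1) :
    LinearMap.range A.mulVecLin = LinearMap.ker A.mulVecLin := by
  refine le_antisymm ?_ fun v hv => ⟨H *ᵥ v, ?_⟩
  · rintro _ ⟨w, rfl⟩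
    simp [LinearMap.mem_ker, mulVec_mulVec, hA]
  · rw [LinearMap.mem_ker, mulVecLin_apply] at hv
    simpa [add_mulVec, ← mulVec_mulVec, hv] using congrArg (· *ᵥ v) hH

theorem two_mul_rank_of_range_eq_ker [Field R] {A : Matrix ι ι R}
    (h : LinearMap.range A.mulVecLin = LinearMap.ker A.mulVecLin) :
    2 * A.rank = Fintype.card ι := by
  rw [← Module.finrank_fintype_fun_eq_card R,
    ← LinearMap.finrank_range_add_finrank_ker A.mulVecLin, ← h, two_mul]
  rfl

theorem span_range_eq_orthogonal_of_range_eq_ker [CommRing R] {A : Matrix ι ι R} (hA : Aᵀ = A)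
    (h : LinearMap.range A.mulVecLin = LinearMap.ker A.mulVecLin) :
    (Submodule.span R (Set.range A) : Set (ι → R)) =
      {v | ∀ c ∈ Submodule.span R (Set.range A), v ⬝ᵥ c = 0} := by
  have hspan : Submodule.span R (Set.range A) = LinearMap.ker A.mulVecLin := by
    rw [← h, range_mulVecLin, col, hA]
  ext v
  have hdot : (∀ c ∈ Submodule.span R (Set.range A), v ⬝ᵥ c = 0) ↔ ∀ x, v ⬝ᵥ A x = 0 :=
    (Submodule.span_le (p := LinearMap.ker (dotProductBilin R R v))).trans
      (Set.range_subset_iff (f := (A : ι → ι → R)))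
  rw [Set.mem_ofPred_eq, hdot, SetLike.mem_coe, hspan, LinearMap.mem_ker, mulVecLin_apply,
    funext_iff]
  simp only [dotProduct_comm v]
  rfl

end Matrix

section Translation

variable {G R : Type*} [AddCommGroup G] [DecidableEq G] [Semiring R]

variable (R) in
def translationMatrix (a : G) : Matrix G G R :=
  of fun x y => if x + a = y then 1 else 0

@[simp]
theorem translationMatrix_zero : translationMatrix R (0 : G) = 1 := by
  ext x y
  simp [translationMatrix, one_apply]

variable [Fintype G]

theorem translationMatrix_mul_translationMatrix (a b : G) :
    translationMatrix R a * translationMatrix R b = translationMatrix R (a + b) := by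
  ext x z
  simp only [translationMatrix, mul_apply, of_apply, ite_mul, one_mul, zero_mul,
    Finset.sum_ite_eq, Finset.mem_univ, if_true, add_assoc]

theorem translationMatrix_mul_diagonal (a : G) (d : G → R) :
    translationMatrix R a * diagonal d = diagonal (fun x => d (x + a)) * translationMatrix R a := by
  ext x y
  by_cases h : x + a = y <;> simp [translationMatrix, h]

theorem commute_translationMatrix (a b : G) :
    Commute (translationMatrix R a) (translationMatrix R b) := by
  rw [Commute, SemiconjBy, translationMatrix_mul_translationMatrix,
    translationMatrix_mul_translationMatrix, add_comm]

end Translation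

section Hypercube

theorem pi_zmod_two_add_self {ι : Type*} (x : ι → ZMod 2) : x + x = 0 :=
  funext fun _ => CharTwo.add_self_eq_zero _

variable (ι : Type*) [Fintype ι]

def hypercubeAdj : Matrix (ι → ZMod 2) (ι → ZMod 2) (ZMod 2) :=
  of fun x y => if hammingDist x y = 1 then 1 else 0

theorem hypercubeAdj_transpose : (hypercubeAdj ι)ᵀ = hypercubeAdj ι := by
  ext x y
  simp [hypercubeAdj, hammingDist_comm]

variable [DecidableEq ι]

theorem hypercubeAdj_eq_sum :
    hypercubeAdj ι = ∑ j, translationMatrix (ZMod 2) (Pi.single j 1) := by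
  ext x y
  obtain ⟨u, rfl⟩ : ∃ u, y = x + u := ⟨y - x, by abel⟩
  rw [hypercubeAdj, of_apply, Matrix.sum_apply, hammingDist_eq_hammingNorm, neg_add_cancel_left]
  simp only [translationMatrix, of_apply, add_right_inj]
  by_cases hu : ∃ j, u = Pi.single j 1
  · obtain ⟨j, rfl⟩ := hu
    rw [if_pos (hammingNorm_eq_one_iff.2 ⟨j, rfl⟩),
      Fintype.sum_eq_single j fun i hij => if_neg fun h => ?_, if_pos rfl]
    simpa [hij] using congrFun h i
  · rw [if_neg (hammingNorm_eq_one_iff.not.2 hu)]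
    exact (Finset.sum_eq_zero fun j _ => if_neg fun h => hu ⟨j, h.symm⟩).symm

variable {ι}

theorem hypercubeAdj_mul_self (h : Even (Fintype.card ι)) :
    hypercubeAdj ι * hypercubeAdj ι = 0 := by
  rw [← sq, hypercubeAdj_eq_sum,
    sum_pow_char_of_commute _ _ fun i j => commute_translationMatrix _ _]
  simp only [sq, translationMatrix_mul_translationMatrix, pi_zmod_two_add_self,
    translationMatrix_zero, Finset.sum_const, Finset.card_univ, nsmul_eq_mul, mul_one]
  exact (CharP.cast_eq_zero_iff _ 2 _).2 (even_iff_two_dvd.1 h)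

theorem hypercubeAdj_homotopy (i : ι) :
    hypercubeAdj ι * (diagonal (fun x => x i) * translationMatrix (ZMod 2) (Pi.single i 1)) +
      diagonal (fun x => x i) * translationMatrix (ZMod 2) (Pi.single i 1) * hypercubeAdj ι =
      1 := by
  set e : ι → ι → ZMod 2 := fun j => Pi.single j 1
  calc _ = ∑ j, diagonal (fun x => (x + e j) i + x i) * translationMatrix (ZMod 2) (e j + e i) := by
        simp only [hypercubeAdj_eq_sum, Finset.sum_mul, Finset.mul_sum, ← Finset.sum_add_distrib]
        refine Finset.sum_congr rfl fun j _ => ?_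
        rw [← mul_assoc, translationMatrix_mul_diagonal, mul_assoc, mul_assoc,
          translationMatrix_mul_translationMatrix, translationMatrix_mul_translationMatrix,
          add_comm (e i), ← add_mul, diagonal_add]
    _ = ∑ j, e j i • translationMatrix (ZMod 2) (e j + e i) := by
        refine Finset.sum_congr rfl fun j _ => ?_
        rw [smul_eq_diagonal_mul]
        congr 2
        ext x
        rw [Pi.add_apply, add_right_comm, CharTwo.add_self_eq_zero, zero_add]
    _ = 1 := by
        rw [Fintype.sum_eq_single i fun j hj => by simp [e, hj.symm], pi_zmod_two_add_self]
        simp [e]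

end Hypercube

/-- for even `n`, the hypercube adjacency matrix is self-dual:
`M * Mᵀ = 0`, `rank M = 2^(n-1)`, and the row space equals its own orthogonal
complement in `F₂^(2ⁿ)`. -/
theorem stmt4 (n : ℕ) (hn : Even n) (hpos : 0 < n)
    (M : Matrix (Fin n → ZMod 2) (Fin n → ZMod 2) (ZMod 2))
    (hM : ∀ x y, M x y = if hammingDist x y = 1 then 1 else 0) :
    M * M.transpose = 0 ∧ M.rank = 2 ^ (n - 1) ∧
      (Submodule.span (ZMod 2) (Set.range M) : Set ((Fin n → ZMod 2) → ZMod 2)) =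
        {v | ∀ c ∈ Submodule.span (ZMod 2) (Set.range M), ∑ y, v y * c y = 0} := by
  obtain rfl : M = hypercubeAdj (Fin n) := Matrix.ext hM
  have hsq := hypercubeAdj_mul_self (by rwa [Fintype.card_fin])
  have hexact := range_mulVecLin_eq_ker_of_homotopy hsq (hypercubeAdj_homotopy ⟨0, hpos⟩)
  refine ⟨by rw [hypercubeAdj_transpose, hsq], ?_,
    span_range_eq_orthogonal_of_range_eq_ker (hypercubeAdj_transpose _) hexact⟩
  have hrank := two_mul_rank_of_range_eq_ker hexact
  have hcard : 2 ^ n = 2 * 2 ^ (n - 1) := by rw [← pow_succ', Nat.sub_add_cancel hpos]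
  rw [Fintype.card_fun, ZMod.card, Fintype.card_fin, hcard] at hrank
  omega
end

section
/- Let n be even and let M be the adjacency matrix of the hypercube Cayley graph of (F₂ⁿ, Sₙ). If c ∈ F₂^{2ⁿ} lies in the row space of M and the support of c (as a subset of F₂ⁿ) is contained in the ball B(x, r) for some x ∈ F₂ⁿ and r < n, then c is an F₂-linear combination of rows of M whose supports are contained in B(x, r); equivalently, c is a sum of Hamming spheres S(y,1) with S(y,1) ⊆ B(x,r). -/
open Finset

namespace Stmt9

variable {n : ℕ}

lemma parity (S B : Finset (Fin n)) :
    ∑ A : Finset (Fin n), (if S ⊆ A ∧ A ⊆ B then (1 : ZMod 2) else 0)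
      = if S = B then 1 else 0 := by
  by_cases h : S = B
  · subst h
    rw [if_pos rfl, Finset.sum_eq_single S]
    · simp
    · intro A _ hA
      rw [if_neg]
      rintro ⟨h1, h2⟩
      exact hA (subset_antisymm h2 h1)
    · simp
  · rw [if_neg h]
    by_cases hSB : S ⊆ B
    · obtain ⟨j, hjB, hjS⟩ := Finset.exists_of_ssubset (hSB.ssubset_of_ne h)
      apply Finset.sum_ninvolution (g := fun A => if j ∈ A then A.erase j else insert j A)
      · intro A
        by_cases hj : j ∈ A <;> simp only [hj, if_true, if_false]
        · have : (S ⊆ A ∧ A ⊆ B) ↔ (S ⊆ A.erase j ∧ A.erase j ⊆ B) := by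
            constructor
            · rintro ⟨h1, h2⟩
              exact ⟨Finset.subset_erase.2 ⟨h1, hjS⟩, (Finset.erase_subset _ _).trans h2⟩
            · rintro ⟨h1, h2⟩
              refine ⟨h1.trans (Finset.erase_subset _ _), ?_⟩
              intro a ha
              rcases eq_or_ne a j with rfl | hne
              · exact hjB
              · exact h2 (Finset.mem_erase.2 ⟨hne, ha⟩)
          rw [if_congr this rfl rfl]
          split <;> decide
        · have : (S ⊆ A ∧ A ⊆ B) ↔ (S ⊆ insert j A ∧ insert j A ⊆ B) := by
            constructor
            · rintro ⟨h1, h2⟩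
              exact ⟨h1.trans (Finset.subset_insert _ _), Finset.insert_subset hjB h2⟩
            · rintro ⟨h1, h2⟩
              refine ⟨?_, (Finset.subset_insert _ _).trans h2⟩
              intro a ha
              rcases Finset.mem_insert.1 (h1 ha) with rfl | h'
              · exact absurd ha hjS
              · exact h'
          rw [if_congr this rfl rfl]
          split <;> decide
      · intro A
        by_cases hj : j ∈ A <;> simp only [hj, if_true, if_false]
        · exact fun _ hc => (Finset.erase_eq_self.mp hc) hj
        · exact fun _ hc => hj (Finset.insert_eq_self.mp hc)
      · intro A; exact Finset.mem_univ _
      · intro A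
        by_cases hj : j ∈ A <;> simp [hj]
    · apply Finset.sum_eq_zero
      intro A _
      rw [if_neg]
      rintro ⟨h1, h2⟩
      exact hSB (h1.trans h2)


def Z (g : Finset (Fin n) → ZMod 2) (S : Finset (Fin n)) : ZMod 2 :=
  ∑ A : Finset (Fin n), if S ⊆ A then g A else 0

lemma ZZ (g : Finset (Fin n) → ZMod 2) (S : Finset (Fin n)) : Z (Z g) S = g S := by
  unfold Z
  have h1 : ∀ A : Finset (Fin n),
      (if S ⊆ A then (∑ B : Finset (Fin n), if A ⊆ B then g B else 0) else 0)
      = ∑ B : Finset (Fin n), if S ⊆ A ∧ A ⊆ B then g B else 0 := by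
    intro A
    split
    · exact Finset.sum_congr rfl (fun B _ => by simp [*])
    · symm; apply Finset.sum_eq_zero; intro B _; rw [if_neg]; tauto
  rw [Finset.sum_congr rfl (fun A _ => h1 A), Finset.sum_comm]
  have h2 : ∀ B : Finset (Fin n), (∑ A : Finset (Fin n), if S ⊆ A ∧ A ⊆ B then g B else 0)
      = (if S = B then 1 else 0) * g B := by
    intro B
    rw [← parity S B, Finset.sum_mul]
    exact Finset.sum_congr rfl (fun A _ => by split <;> simp)
  rw [Finset.sum_congr rfl (fun B _ => h2 B)]
  simp


def Bflip (B : Finset (Fin n)) (i : Fin n) : Finset (Fin n) :=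
  if i ∈ B then B.erase i else insert i B

lemma subset_Bflip_of_notMem {S B : Finset (Fin n)} {i : Fin n} (hi : i ∉ S) :
    S ⊆ Bflip B i ↔ S ⊆ B := by
  unfold Bflip
  split_ifs with hB
  · rw [Finset.subset_erase]
    exact and_iff_left hi
  · constructor
    · intro h j hj
      rcases Finset.mem_insert.1 (h hj) with rfl | h'
      · exact absurd hj hi
      · exact h'
    · exact fun h => h.trans (Finset.subset_insert _ _)

lemma subset_Bflip_of_mem {S B : Finset (Fin n)} {i : Fin n} (hi : i ∈ S) :
    S ⊆ Bflip B i ↔ i ∉ B ∧ S.erase i ⊆ B := by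
  unfold Bflip
  split_ifs with hB
  · constructor
    · intro h
      exact ((Finset.mem_erase.1 (h hi)).1 rfl).elim
    · rintro ⟨h1, -⟩
      exact absurd hB h1
  · constructor
    · intro h
      refine ⟨hB, fun j hj => ?_⟩
      obtain ⟨hne, hjS⟩ := Finset.mem_erase.1 hj
      rcases Finset.mem_insert.1 (h hjS) with rfl | h'
      · exact absurd rfl hne
      · exact h'
    · rintro ⟨-, h2⟩ j hj
      rcases eq_or_ne j i with rfl | hne
      · exact Finset.mem_insert_self _ _
      · exact Finset.mem_insert_of_mem (h2 (Finset.mem_erase.2 ⟨hne, hj⟩))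

lemma count_key (hn : Even n) (S B : Finset (Fin n)) :
    ∑ i : Fin n, (if S ⊆ Bflip B i then (1 : ZMod 2) else 0)
      = ∑ i ∈ S, (if S.erase i ⊆ B then (1 : ZMod 2) else 0) := by
  classical
  rw [← Finset.sum_filter_add_sum_filter_not Finset.univ (· ∈ S)]
  have e1 : ∑ i ∈ Finset.univ.filter (· ∈ S), (if S ⊆ Bflip B i then (1:ZMod 2) else 0)
      = ∑ i ∈ S, (if i ∉ B ∧ S.erase i ⊆ B then (1:ZMod 2) else 0) := by
    rw [Finset.filter_univ_mem]
    exact Finset.sum_congr rfl fun i hi => if_congr (subset_Bflip_of_mem hi) rfl rfl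
  have e2 : ∑ i ∈ Finset.univ.filter (· ∉ S), (if S ⊆ Bflip B i then (1:ZMod 2) else 0)
      = (S.card : ZMod 2) * (if S ⊆ B then 1 else 0) := by
    have : ∀ i ∈ Finset.univ.filter (· ∉ S), (if S ⊆ Bflip B i then (1:ZMod 2) else 0)
        = (if S ⊆ B then 1 else 0) := by
      intro i hi
      exact if_congr (subset_Bflip_of_notMem (Finset.mem_filter.1 hi).2) rfl rfl
    rw [Finset.sum_congr rfl this, Finset.sum_const, nsmul_eq_mul]
    congr 1
    have hcard : (Finset.univ.filter (· ∉ S)).card = n - S.card := by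
      rw [Finset.filter_not, Finset.filter_univ_mem, Finset.card_sdiff_of_subset (Finset.subset_univ S)]
      simp
    rw [hcard, Nat.cast_sub (by simpa using Finset.card_le_univ S)]
    have hn2 : ((n : ZMod 2)) = 0 := by
      rw [ZMod.natCast_eq_zero_iff]
      exact hn.two_dvd
    rw [hn2, zero_sub, CharTwo.neg_eq]
  rw [e1, e2]
  have e3 : ∑ i ∈ S, (if S.erase i ⊆ B then (1 : ZMod 2) else 0)
      = ∑ i ∈ S, ((if S ⊆ B then (1:ZMod 2) else 0) + (if i ∉ B ∧ S.erase i ⊆ B then 1 else 0)) := by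
    refine Finset.sum_congr rfl fun i hi => ?_
    by_cases h1 : S ⊆ B
    · have h2 : S.erase i ⊆ B := (Finset.erase_subset _ _).trans h1
      have h3 : i ∈ B := h1 hi
      simp [h1, h2, h3]
    · by_cases h2 : S.erase i ⊆ B
      · have h3 : i ∉ B := by
          intro hiB
          exact h1 (by
            intro j hj
            rcases eq_or_ne j i with rfl | hne
            · exact hiB
            · exact h2 (Finset.mem_erase.2 ⟨hne, hj⟩))
        simp [h1, h2, h3]
      · simp [h1, h2]
  rw [e3, Finset.sum_add_distrib, Finset.sum_const, nsmul_eq_mul]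
  ring


lemma zmod_add_one_ne : ∀ a : ZMod 2, a + 1 ≠ a := by decide
lemma zmod_add_one_add_one : ∀ a : ZMod 2, a + 1 + 1 = a := by decide
lemma zmod_eq_add_one_of_ne : ∀ a b : ZMod 2, a ≠ b → a = b + 1 := by decide

def Dx (x u : Fin n → ZMod 2) : Finset (Fin n) := Finset.univ.filter (fun i => u i ≠ x i)

lemma mem_Dx {x u : Fin n → ZMod 2} {i : Fin n} : i ∈ Dx x u ↔ u i ≠ x i := by
  simp [Dx]

lemma card_Dx (x u : Fin n → ZMod 2) : (Dx x u).card = hammingDist x u := by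
  unfold Dx hammingDist
  congr 1
  ext i
  simp [ne_comm]

def chi (x : Fin n → ZMod 2) (A : Finset (Fin n)) : Fin n → ZMod 2 :=
  fun i => if i ∈ A then x i + 1 else x i

lemma Dx_chi (x : Fin n → ZMod 2) (A : Finset (Fin n)) : Dx x (chi x A) = A := by
  ext i
  rw [mem_Dx]
  unfold chi
  split_ifs with h
  · simp only [h, iff_true]
    exact zmod_add_one_ne _
  · simp only [h, iff_false, not_not, not_ne_iff]

lemma chi_Dx (x u : Fin n → ZMod 2) : chi x (Dx x u) = u := by
  funext i
  unfold chi
  split_ifs with h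
  · exact (zmod_eq_add_one_of_ne _ _ (mem_Dx.1 h)).symm
  · exact (not_not.1 fun hh => h (mem_Dx.2 hh)).symm

def flp (u : Fin n → ZMod 2) (i : Fin n) : Fin n → ZMod 2 :=
  Function.update u i (u i + 1)

lemma flp_apply_same (u : Fin n → ZMod 2) (i : Fin n) : flp u i i = u i + 1 := by
  simp [flp]

lemma flp_apply_ne (u : Fin n → ZMod 2) {i j : Fin n} (h : j ≠ i) : flp u i j = u j := by
  simp [flp, Function.update_of_ne h]

lemma flp_invol (i : Fin n) : Function.Involutive (fun u : Fin n → ZMod 2 => flp u i) := by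
  intro u
  funext j
  show flp (flp u i) i j = u j
  rcases eq_or_ne j i with rfl | h
  · rw [flp_apply_same, flp_apply_same, zmod_add_one_add_one]
  · rw [flp_apply_ne _ h, flp_apply_ne _ h]

lemma flp_inj (z : Fin n → ZMod 2) : Function.Injective (flp z) := by
  intro i j h
  by_contra hne
  have h1 := congrFun h i
  rw [flp_apply_same, flp_apply_ne z hne] at h1
  exact zmod_add_one_ne _ h1

lemma Dx_flp (x u : Fin n → ZMod 2) (i : Fin n) : Dx x (flp u i) = Bflip (Dx x u) i := by
  ext j
  rw [mem_Dx]
  unfold Bflip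
  rcases eq_or_ne j i with rfl | h
  · rw [flp_apply_same]
    split_ifs with hB
    · simp only [Finset.mem_erase, ne_eq, not_true_eq_false, false_and, iff_false, not_not,
        not_ne_iff]
      rw [zmod_eq_add_one_of_ne _ _ (mem_Dx.1 hB), zmod_add_one_add_one]
    · simp only [Finset.mem_insert, true_or, iff_true]
      rw [(not_not.1 fun hh => hB (mem_Dx.2 hh) : u j = x j)]
      exact zmod_add_one_ne _
  · rw [flp_apply_ne _ h]
    split_ifs with hB
    · simp [Finset.mem_erase, h, mem_Dx]
    · simp [Finset.mem_insert, h, mem_Dx]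

lemma sphere_eq (z : Fin n → ZMod 2) :
    Finset.univ.filter (fun y => hammingDist y z = 1) = Finset.univ.image (flp z) := by
  ext y
  simp only [Finset.mem_filter, Finset.mem_univ, true_and, Finset.mem_image]
  constructor
  · intro h
    have hcard : (Finset.univ.filter fun i => y i ≠ z i).card = 1 := h
    obtain ⟨a, ha⟩ := Finset.card_eq_one.1 hcard
    refine ⟨a, ?_⟩
    funext j
    rcases eq_or_ne j a with rfl | hne
    · have hya : y j ≠ z j := by
        have : j ∈ Finset.univ.filter fun i => y i ≠ z i := by
          rw [ha]; exact Finset.mem_singleton_self j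
        exact (Finset.mem_filter.1 this).2
      rw [flp_apply_same]
      exact (zmod_eq_add_one_of_ne _ _ hya).symm
    · have : y j = z j := by
        by_contra hc
        have : j ∈ Finset.univ.filter fun i => y i ≠ z i :=
          Finset.mem_filter.2 ⟨Finset.mem_univ j, hc⟩
        rw [ha] at this
        exact hne (Finset.mem_singleton.1 this)
      rw [flp_apply_ne _ hne, this]
  · rintro ⟨i, rfl⟩
    show (Finset.univ.filter fun j => flp z i j ≠ z j).card = 1
    have : (Finset.univ.filter fun j => flp z i j ≠ z j) = {i} := by
      ext j
      simp only [Finset.mem_filter, Finset.mem_univ, true_and, Finset.mem_singleton]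
      rcases eq_or_ne j i with rfl | hne
      · simp only [iff_true]
        rw [flp_apply_same]
        exact zmod_add_one_ne _
      · simp only [hne, iff_false, not_not, not_ne_iff]
        rw [flp_apply_ne _ hne]
    rw [this, Finset.card_singleton]


lemma Dx_bijective (x : Fin n → ZMod 2) : Function.Bijective (Dx x) :=
  ⟨fun u v h => by rw [← chi_Dx x u, h, chi_Dx], fun A => ⟨chi x A, Dx_chi x A⟩⟩

def mulM (T : (Fin n → ZMod 2) → ZMod 2) (z : Fin n → ZMod 2) : ZMod 2 :=
  ∑ y : Fin n → ZMod 2, T y * (if hammingDist y z = 1 then 1 else 0)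

lemma mulM_eq_sum_flp (T : (Fin n → ZMod 2) → ZMod 2) (z : Fin n → ZMod 2) :
    mulM T z = ∑ i : Fin n, T (flp z i) := by
  unfold mulM
  have h1 : ∀ y : Fin n → ZMod 2,
      T y * (if hammingDist y z = 1 then (1 : ZMod 2) else 0)
        = if hammingDist y z = 1 then T y else 0 := fun y => by split <;> simp
  rw [Finset.sum_congr rfl fun y _ => h1 y, ← Finset.sum_filter, sphere_eq,
    Finset.sum_image fun i _ j _ h => flp_inj z h]

def U (x : Fin n → ZMod 2) (T : (Fin n → ZMod 2) → ZMod 2) (S : Finset (Fin n)) : ZMod 2 :=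
  ∑ u : Fin n → ZMod 2, if S ⊆ Dx x u then T u else 0

lemma U_eq_Z (x : Fin n → ZMod 2) (T : (Fin n → ZMod 2) → ZMod 2) (S : Finset (Fin n)) :
    U x T S = Z (fun A => T (chi x A)) S := by
  unfold U Z
  apply Fintype.sum_bijective (Dx x) (Dx_bijective x)
  intro u
  simp only [chi_Dx]

lemma U_Zg (x : Fin n → ZMod 2) (g : Finset (Fin n) → ZMod 2) (S : Finset (Fin n)) :
    U x (fun u => Z g (Dx x u)) S = g S := by
  rw [U_eq_Z]
  simp only [Dx_chi]
  exact ZZ g S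

lemma point_eq (x u : Fin n → ZMod 2) (f : (Fin n → ZMod 2) → ZMod 2) :
    f u = Z (U x f) (Dx x u) := by
  have h1 : U x f = Z (fun A => f (chi x A)) := by
    funext S
    exact U_eq_Z x f S
  rw [h1, ZZ, chi_Dx]

lemma U_mulM (hn : Even n) (x : Fin n → ZMod 2) (T : (Fin n → ZMod 2) → ZMod 2)
    (S : Finset (Fin n)) :
    U x (mulM T) S = ∑ i ∈ S, U x T (S.erase i) := by
  unfold U
  have l1 : ∀ z : Fin n → ZMod 2, (if S ⊆ Dx x z then mulM T z else 0)
      = ∑ i : Fin n, (if S ⊆ Dx x z then T (flp z i) else 0) := by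
    intro z
    split
    · exact mulM_eq_sum_flp T z
    · exact (Finset.sum_const_zero).symm
  rw [Finset.sum_congr rfl fun z _ => l1 z, Finset.sum_comm]
  have l2 : ∀ i : Fin n, (∑ z : Fin n → ZMod 2, if S ⊆ Dx x z then T (flp z i) else 0)
      = ∑ w : Fin n → ZMod 2, if S ⊆ Bflip (Dx x w) i then T w else 0 := by
    intro i
    symm
    apply Fintype.sum_bijective (fun w => flp w i) (flp_invol i).bijective
    intro w
    show (if S ⊆ Bflip (Dx x w) i then T w else 0) = (if S ⊆ Dx x (flp w i) then T (flp (flp w i) i) else 0)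
    rw [Dx_flp]
    have hww : flp (flp w i) i = w := flp_invol i w
    rw [hww]
  rw [Finset.sum_congr rfl fun i (_ : i ∈ Finset.univ) => l2 i, Finset.sum_comm]
  rw [Finset.sum_comm (s := S)]
  apply Finset.sum_congr rfl
  intro w _
  have := count_key hn S (Dx x w)
  calc (∑ i : Fin n, if S ⊆ Bflip (Dx x w) i then T w else 0)
      = (∑ i : Fin n, if S ⊆ Bflip (Dx x w) i then (1 : ZMod 2) else 0) * T w := by
        rw [Finset.sum_mul]
        exact Finset.sum_congr rfl fun i _ => by split <;> simp
    _ = (∑ i ∈ S, if S.erase i ⊆ Dx x w then (1 : ZMod 2) else 0) * T w := by rw [this]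
    _ = ∑ i ∈ S, (if S.erase i ⊆ Dx x w then T w else 0) := by
        rw [Finset.sum_mul]
        exact Finset.sum_congr rfl fun i _ => by split <;> simp

end Stmt9

open Stmt9 in
/-- for even `n`, if a word `c` of the row space of the hypercube
adjacency matrix `M` has support contained in the Hamming ball `B(x,r)` with `r < n`,
then `c` is a sum of rows of `M` (spheres of radius 1) whose supports are contained
in `B(x,r)`. -/
theorem stmt9 (n : ℕ) (hn : Even n)
    (M : Matrix (Fin n → ZMod 2) (Fin n → ZMod 2) (ZMod 2))
    (hM : ∀ x y, M x y = if hammingDist x y = 1 then 1 else 0)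
    (c : (Fin n → ZMod 2) → ZMod 2)
    (hc : c ∈ Submodule.span (ZMod 2) (Set.range M))
    (x : Fin n → ZMod 2) (r : ℕ) (hr : r < n)
    (hsupp : ∀ y, c y ≠ 0 → hammingDist x y ≤ r) :
    c ∈ Submodule.span (ZMod 2)
      {row | ∃ y, row = M y ∧ ∀ z, M y z ≠ 0 → hammingDist x z ≤ r} := by
  classical
  obtain ⟨t, ht⟩ := (Submodule.mem_span_range_iff_exists_fun (ZMod 2)).1 hc
  have hct : c = mulM t := by
    funext z
    rw [← ht, Finset.sum_apply]
    exact Finset.sum_congr rfl fun y _ => by rw [Pi.smul_apply, smul_eq_mul, hM y z]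
  set g : Finset (Fin n) → ZMod 2 := fun S => if S.card < r then U x t S else 0 with hg
  set t' : (Fin n → ZMod 2) → ZMod 2 := fun u => Z g (Dx x u) with ht'
  have hUt' : ∀ S, U x t' S = g S := fun S => U_Zg x g S
  have hUc' : ∀ S, U x (mulM t') S = U x c S := by
    intro S
    rw [U_mulM hn, Finset.sum_congr rfl fun i (_ : i ∈ S) => hUt' (S.erase i)]
    by_cases hS : S.card ≤ r
    · rw [hct, U_mulM hn]
      refine Finset.sum_congr rfl fun i hi => ?_
      have hlt : (S.erase i).card < r := lt_of_lt_of_le (Finset.card_erase_lt_of_mem hi) hS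
      show (if (S.erase i).card < r then U x t (S.erase i) else 0) = U x t (S.erase i)
      rw [if_pos hlt]
    · have hL0 : ∑ i ∈ S, g (S.erase i) = 0 := by
        refine Finset.sum_eq_zero fun i hi => ?_
        show (if (S.erase i).card < r then U x t (S.erase i) else 0) = 0
        rw [if_neg]
        have hce := Finset.card_erase_of_mem hi
        have hpos := Finset.card_pos.2 ⟨i, hi⟩
        omega
      have hR0 : U x c S = 0 := by
        refine Finset.sum_eq_zero fun u _ => ?_
        split_ifs with h
        · by_contra hcu
          have h1 := hsupp u hcu
          have h2 : S.card ≤ (Dx x u).card := Finset.card_le_card h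
          rw [card_Dx] at h2
          omega
        · rfl
      rw [hL0, hR0]
  have hmt' : mulM t' = c := by
    funext u
    rw [point_eq x u (mulM t'), point_eq x u c]
    congr 1
    funext S
    exact hUc' S
  have hsupp' : ∀ u, t' u ≠ 0 → hammingDist x u < r := by
    intro u hu
    by_contra hge
    push_neg at hge
    apply hu
    show (∑ A : Finset (Fin n), if Dx x u ⊆ A then g A else 0) = 0
    refine Finset.sum_eq_zero fun A _ => ?_
    split_ifs with hsub
    · show (if A.card < r then U x t A else 0) = 0
      rw [if_neg]
      have h2 : (Dx x u).card ≤ A.card := Finset.card_le_card hsub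
      rw [card_Dx] at h2
      omega
    · rfl
  have hsum : (∑ u : Fin n → ZMod 2, t' u • M u) = c := by
    rw [← hmt']
    funext z
    rw [Finset.sum_apply]
    unfold Stmt9.mulM
    exact Finset.sum_congr rfl fun y _ => by rw [Pi.smul_apply, smul_eq_mul, hM y z]
  rw [← hsum]
  refine Submodule.sum_mem _ fun u _ => ?_
  by_cases h : t' u = 0
  · rw [h, zero_smul]
    exact Submodule.zero_mem _
  · refine Submodule.smul_mem _ _ (Submodule.subset_span ⟨u, rfl, fun z hz => ?_⟩)
    rw [hM u z] at hz
    have hd : hammingDist u z = 1 := by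
      by_contra hd
      rw [if_neg hd] at hz
      exact hz rfl
    have htri := hammingDist_triangle x u z
    have hxu := hsupp' u h
    omega
end

section
/- Let n be even, M the adjacency matrix of the hypercube Cayley graph of (F₂ⁿ, Sₙ), and c a nonzero element of the row space of M, viewed as a subset of F₂ⁿ. Let ρ be minimal with c ⊆ B(0, ρ). Then for every coordinate index i ∈ {1,…,n}, there exists an element of c ∩ S(0, ρ) whose i-th coordinate equals 1. -/
/-!
Every word of the row space meets each sphere `S(w, 1)` in an even number of points: a row
`M u` meets it in `n`, `2` or `0` points according as `d(u, w)` is `0`, `2` or neither, and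
parity passes to sums. Now take `y ∈ c` of weight `ρ`; if `yᵢ = 0`, then `w = y + eᵢ` has weight
`ρ + 1` and `y ∈ c ∩ S(w, 1)`, so `c` contains a second point `w + eⱼ` (`j ≠ i`) of that sphere.
As `c ⊆ B(0, ρ)`, it has weight `ρ`, and its `i`-th coordinate is still `1`.
-/

open Finset

variable {ι : Type*} [Fintype ι] [DecidableEq ι]

theorem hammingNorm_add_single_one_of_eq_zero {v : ι → ZMod 2} {j : ι} (h : v j = 0) :
    hammingNorm (v + Pi.single j 1) = hammingNorm v + 1 := by
  have hsupp : ({i | (v + Pi.single j 1 : ι → ZMod 2) i ≠ 0} : Finset ι) =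
      insert j ({i | v i ≠ 0} : Finset ι) := by
    ext i
    rcases eq_or_ne i j with rfl | hi
    · simp [h]
    · simp [hi]
  rw [hammingNorm, hsupp, card_insert_of_notMem (by simp [h]), hammingNorm]

theorem hammingNorm_add_single_one_of_ne_zero {v : ι → ZMod 2} {j : ι} (h : v j ≠ 0) :
    hammingNorm (v + Pi.single j 1) + 1 = hammingNorm v := by
  have h1 : v j = 1 := Fin.eq_one_of_ne_zero _ h
  have hsupp : ({i | (v + Pi.single j 1 : ι → ZMod 2) i ≠ 0} : Finset ι) =
      erase ({i | v i ≠ 0} : Finset ι) j := by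
    ext i
    rcases eq_or_ne i j with rfl | hi
    · simp [h1]; decide
    · simp [hi]
  rw [hammingNorm, hsupp, card_erase_add_one (by simp [h]), hammingNorm]

theorem hammingDist_add_single_one (u w : ι → ZMod 2) (j : ι) :
    hammingDist u (w + Pi.single j 1) = hammingNorm (u + w + Pi.single j 1) := by
  rw [hammingDist_eq_hammingNorm, add_assoc,
    show -u = u from funext fun i => ZMod.neg_eq_self_mod_two (u i)]

theorem even_card_filter_hammingNorm_add_single_one_eq_one (hι : Even (Fintype.card ι))
    (v : ι → ZMod 2) : Even #{j | hammingNorm (v + Pi.single j 1) = 1} := by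
  have hflip : ∀ j, hammingNorm (v + Pi.single j 1) = 1 ↔
      if v j = 0 then hammingNorm v = 0 else hammingNorm v = 2 := by
    intro j
    split_ifs with hj
    · rw [hammingNorm_add_single_one_of_eq_zero hj]; omega
    · have := hammingNorm_add_single_one_of_ne_zero hj; omega
  obtain h0 | h2 | hother :
      hammingNorm v = 0 ∨ hammingNorm v = 2 ∨ (hammingNorm v ≠ 0 ∧ hammingNorm v ≠ 2) := by
    omega
  · have hv : v = 0 := hammingNorm_eq_zero.mp h0
    rwa [filter_true_of_mem fun j _ => (hflip j).2 (by simp [hv]), card_univ]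
  · convert (by rw [h2]; exact even_two : Even (hammingNorm v)) using 1
    rw [hammingNorm]
    congr 1
    ext j
    simp only [mem_filter, mem_univ, true_and, hflip]
    split_ifs with hj <;> simp [hj, h2]
  · rw [filter_false_of_mem fun j _ => by rw [hflip]; split_ifs <;> omega, card_empty]
    exact Even.zero

theorem sum_hypercube_adj_add_single_one_eq_zero (hι : Even (Fintype.card ι))
    (u w : ι → ZMod 2) :
    ∑ j, (if hammingDist u (w + Pi.single j 1) = 1 then 1 else 0 : ZMod 2) = 0 := by
  simp_rw [hammingDist_add_single_one]
  rw [sum_boole, ZMod.natCast_eq_zero_iff_even]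
  exact even_card_filter_hammingNorm_add_single_one_eq_one hι (u + w)

theorem sum_add_single_one_eq_zero_of_mem_span (hι : Even (Fintype.card ι))
    {M : Matrix (ι → ZMod 2) (ι → ZMod 2) (ZMod 2)}
    (hM : ∀ x y, M x y = if hammingDist x y = 1 then 1 else 0)
    {c : (ι → ZMod 2) → ZMod 2} (hc : c ∈ Submodule.span (ZMod 2) (Set.range M))
    (w : ι → ZMod 2) : ∑ j, c (w + Pi.single j 1) = 0 := by
  induction hc using Submodule.span_induction with
  | mem x hx =>
    obtain ⟨u, rfl⟩ := hx
    simpa only [hM] using sum_hypercube_adj_add_single_one_eq_zero hι u w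
  | zero => simp
  | add x y _ _ hx hy => simp only [Pi.add_apply, sum_add_distrib, hx, hy, add_zero]
  | smul a x _ hx => simp only [Pi.smul_apply, smul_eq_mul, ← mul_sum, hx, mul_zero]

theorem exists_hammingNorm_eq_apply_eq_one {c : (ι → ZMod 2) → ZMod 2}
    (hsum : ∀ w : ι → ZMod 2, ∑ j, c (w + Pi.single j 1) = 0) {ρ : ℕ}
    (hball : ∀ y, c y ≠ 0 → hammingNorm y ≤ ρ) {y : ι → ZMod 2} (hy : c y ≠ 0)
    (hyρ : hammingNorm y = ρ) (i : ι) : ∃ x, c x ≠ 0 ∧ hammingNorm x = ρ ∧ x i = 1 := by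
  by_cases hyi : y i = 0
  swap
  · exact ⟨y, hy, hyρ, Fin.eq_one_of_ne_zero _ hyi⟩
  set w := y + Pi.single i 1 with hw
  have hwy : w + Pi.single i 1 = y := by
    rw [hw, add_assoc, ← Pi.single_add, show (1 + 1 : ZMod 2) = 0 from rfl, Pi.single_zero,
      add_zero]
  have hwρ : hammingNorm w = ρ + 1 := hyρ ▸ hammingNorm_add_single_one_of_eq_zero hyi
  obtain ⟨j, hji, hx⟩ : ∃ j ∈ univ.erase i, c (w + Pi.single j 1) ≠ 0 := by
    apply exists_ne_zero_of_sum_ne_zero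
    intro hrest
    have hw := hsum w
    rw [← add_sum_erase _ _ (mem_univ i), hwy, hrest, add_zero] at hw
    exact hy hw
  have hwj : w j ≠ 0 := by
    intro hwj
    have := hball _ hx
    rw [hammingNorm_add_single_one_of_eq_zero hwj] at this
    omega
  refine ⟨w + Pi.single j 1, hx, ?_, ?_⟩
  · have := hammingNorm_add_single_one_of_ne_zero hwj
    omega
  · simp [hw, hyi, Pi.single_eq_of_ne (ne_of_mem_erase hji).symm]

/-- for even `n`, let `c` be a nonzero word of the row space of the
hypercube adjacency matrix `M`, and `ρ` minimal with the support of `c` contained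
in `B(0,ρ)`. Then for every coordinate `i` there is an element of `c ∩ S(0,ρ)`
whose `i`-th coordinate is `1`. -/
theorem stmt10 (n : ℕ) (hn : Even n)
    (M : Matrix (Fin n → ZMod 2) (Fin n → ZMod 2) (ZMod 2))
    (hM : ∀ x y, M x y = if hammingDist x y = 1 then 1 else 0)
    (c : (Fin n → ZMod 2) → ZMod 2)
    (hc : c ∈ Submodule.span (ZMod 2) (Set.range M)) (hne : c ≠ 0)
    (ρ : ℕ)
    (hball : ∀ y, c y ≠ 0 → hammingNorm y ≤ ρ)
    (hmin : ∀ ρ' < ρ, ∃ y, c y ≠ 0 ∧ ρ' < hammingNorm y) :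
    ∀ i : Fin n, ∃ y, c y ≠ 0 ∧ hammingNorm y = ρ ∧ y i = 1 := by
  obtain ⟨y, hy, hyρ⟩ : ∃ y, c y ≠ 0 ∧ hammingNorm y = ρ := by
    rcases Nat.eq_zero_or_pos ρ with rfl | hρ
    · obtain ⟨y, hy⟩ := Function.ne_iff.mp hne
      exact ⟨y, hy, Nat.le_zero.mp (hball y hy)⟩
    · obtain ⟨y, hy, hlt⟩ := hmin (ρ - 1) (by omega)
      exact ⟨y, hy, le_antisymm (hball y hy) (by omega)⟩
  exact exists_hammingNorm_eq_apply_eq_one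
    (sum_add_single_one_eq_zero_of_mem_span (by simpa using hn) hM hc) hball hy hyρ
end

section
/- Let n be even and M the adjacency matrix of the hypercube Cayley graph of (F₂ⁿ, Sₙ). The vector in F₂^{2ⁿ} of weight 1 supported on the single vertex 0 does not belong to the row space of M. -/
/-!
The linear functional `v ↦ ∑ v y` over the vectors `y` of even Hamming weight vanishes on every
row of `M`: the `n` neighbours of `x` all have weight parity opposite to that of `x`, so the row
of `x` contains either none or all `n` of them, and `n` is even. On the indicator of `0` it takes
the value `1`.
-/

open Finset Matrix

lemma dotProduct_eq_zero_of_mem_span {ι R : Type*} [Fintype ι] [CommSemiring R]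
    {S : Set (ι → R)} {w v : ι → R} (hS : ∀ u ∈ S, u ⬝ᵥ w = 0)
    (hv : v ∈ Submodule.span R S) : v ⬝ᵥ w = 0 := by
  induction hv using Submodule.span_induction with
  | mem u hu => exact hS u hu
  | zero => exact zero_dotProduct w
  | add u u' _ _ hu hu' => rw [add_dotProduct, hu, hu', add_zero]
  | smul a u _ hu => rw [smul_dotProduct, hu, smul_zero]

section BinaryHypercube

variable {ι : Type*} [Fintype ι] [DecidableEq ι]

lemma hammingNorm_eq_one_iff_eq_single (z : ι → ZMod 2) :
    hammingNorm z = 1 ↔ ∃ i, z = Pi.single i 1 := by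
  rw [hammingNorm, card_eq_one]
  refine exists_congr fun i => ⟨fun h => funext fun j => ?_, fun h => ?_⟩
  · have hj : z j ≠ 0 ↔ j = i := by simpa using congrArg (j ∈ ·) h
    have hbinary : z j ≠ 0 ↔ z j = 1 := by generalize z j = a; revert a; decide
    by_cases hji : j = i
    · subst hji
      simpa [← hbinary] using hj
    · simpa [hji] using hj
  · ext j
    by_cases hji : j = i <;> simp [h, hji]

lemma hammingDist_eq_one_iff_exists_eq_add_single (x y : ι → ZMod 2) :
    hammingDist x y = 1 ↔ ∃ i, y = x + Pi.single i 1 := by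
  rw [hammingDist_eq_hammingNorm, hammingNorm_eq_one_iff_eq_single]
  exact exists_congr fun i => neg_add_eq_iff_eq_add

omit [Fintype ι] in
lemma add_single_one_injective (x : ι → ZMod 2) :
    Function.Injective fun i => x + Pi.single i (1 : ZMod 2) := by
  intro i j hij
  by_contra hne
  simpa [Pi.single_apply, hne] using congrFun (add_left_cancel hij) i

lemma filter_hammingDist_eq_one (x : ι → ZMod 2) :
    ({y | hammingDist x y = 1} : Finset (ι → ZMod 2)) =
      univ.image fun i => x + Pi.single i (1 : ZMod 2) := by
  ext y
  simp only [mem_filter, mem_univ, true_and, mem_image,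
    hammingDist_eq_one_iff_exists_eq_add_single]
  exact exists_congr fun i => eq_comm

def evenWeightIndicator (y : ι → ZMod 2) : ZMod 2 := ∑ j, y j + 1

lemma evenWeightIndicator_add_single_one (x : ι → ZMod 2) (i : ι) :
    evenWeightIndicator (x + Pi.single i 1) = ∑ j, x j := by
  simp only [evenWeightIndicator, Pi.add_apply, sum_add_distrib, sum_pi_single', mem_univ,
    if_true, add_assoc, CharTwo.add_self_eq_zero, add_zero]

lemma hypercube_row_dotProduct_evenWeightIndicator (hι : Even (Fintype.card ι))
    (x : ι → ZMod 2) :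
    (fun y => if hammingDist x y = 1 then 1 else 0) ⬝ᵥ evenWeightIndicator = 0 := by
  simp only [dotProduct, ite_mul, one_mul, zero_mul, ← sum_filter, filter_hammingDist_eq_one,
    sum_image (add_single_one_injective x).injOn, evenWeightIndicator_add_single_one, sum_const,
    card_univ, nsmul_eq_mul, hι.natCast_zmod_two, zero_mul]

end BinaryHypercube

/-- for even `n`, the weight-1 vector supported on the single vertex
`0 ∈ F₂ⁿ` is not in the row space of the hypercube adjacency matrix. -/
theorem stmt11 (n : ℕ) (hn : Even n)
    (M : Matrix (Fin n → ZMod 2) (Fin n → ZMod 2) (ZMod 2))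
    (hM : ∀ x y, M x y = if hammingDist x y = 1 then 1 else 0) :
    (fun y : Fin n → ZMod 2 => if y = 0 then (1 : ZMod 2) else 0) ∉
      Submodule.span (ZMod 2) (Set.range M) := by
  intro hmem
  have hrows : ∀ u ∈ Set.range M, u ⬝ᵥ evenWeightIndicator = 0 := by
    rintro _ ⟨x, rfl⟩
    rw [show M x = _ from funext (hM x)]
    exact hypercube_row_dotProduct_evenWeightIndicator (by rwa [Fintype.card_fin]) x
  simpa [dotProduct, evenWeightIndicator] using dotProduct_eq_zero_of_mem_span hrows hmem
end

section
/- Let m be even, W a set of generators with Sₘ ∪ W even of size n = m + |W|, M = M(Sₘ ∪ W) the adjacency matrix of the Cayley graph of (F₂^m, Sₘ ∪ W), and C = row space of M. Suppose c ∈ C^⊥ \ C, and let d be the minimum distance of the code with parity-check matrix whose columns are Sₘ ∪ W. Then the support of c is not contained in any ball of radius ⌊(d−1)/2⌋ − 2 in the Cayley graph metric. -/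
/-!
Over `F₂` the adjacency operator `A f z = ∑ᵢ f (z + gᵢ)` of the Cayley graph is symmetric, so the
row space `C` of `M` is the image of `A` and `C^⊥` is its kernel. Let `c ∈ ker A` be supported in
the ball of radius `r` about `x`, with `2r + 3 ≤ d` (for `r = ⌊(d-1)/2⌋ - 2` this only asks
`d ≥ 3`, i.e. distinct nonzero generators). Pull `c` back along `u ↦ x + ∑ uᵢ gᵢ` to the Hamming
cube `F₂ⁿ` and cut it off outside the Hamming ball of radius `r`. Relations among the generators
have weight at least `d`, so this map is injective on balls of radius `r + 2`; hence the cut-off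
pullback is still killed by the cube's adjacency operator, and it pushes forward to `c`. On the
cube every function killed by the adjacency operator lies in its image, and pushforward
intertwines the two adjacency operators, so `c ∈ C`.
-/

open Finset Function

theorem ZMod.eq_zero_or_eq_one_of_two (a : ZMod 2) : a = 0 ∨ a = 1 := by
  revert a
  decide

section Hamming

variable {ι : Type*} [Fintype ι] [DecidableEq ι] {β : ι → Type*} [∀ i, AddGroup (β i)]
  [∀ i, DecidableEq (β i)]

theorem hammingNorm_add_single_le (u : ∀ i, β i) (i : ι) (a : β i) :
    hammingNorm (u + Pi.single i a) ≤ hammingNorm u + 1 := by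
  have hdist : hammingDist (u + Pi.single i a) u ≤ 1 := by
    refine (card_le_card fun j hj => ?_).trans (card_singleton i).le
    by_contra hji
    simp [Pi.single_eq_of_ne (mem_singleton.not.1 hji)] at hj
  calc hammingNorm (u + Pi.single i a) = hammingDist (u + Pi.single i a) 0 :=
        (hammingDist_zero_right _).symm
    _ ≤ hammingDist (u + Pi.single i a) u + hammingDist u 0 := hammingDist_triangle _ _ _
    _ ≤ hammingNorm u + 1 := by rw [hammingDist_zero_right]; omega

theorem hammingNorm_le_hammingNorm_add_single (u : ∀ i, β i) (i : ι) (a : β i) :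
    hammingNorm u ≤ hammingNorm (u + Pi.single i a) + 1 := by
  simpa [Pi.single_neg] using hammingNorm_add_single_le (u + Pi.single i a) i (-a)

end Hamming

section Cayley

variable {V : Type*} [AddCommGroup V] {ι : Type*} [Fintype ι]

def cayleyAdj (g : ι → V) : (V → ZMod 2) →ₗ[ZMod 2] (V → ZMod 2) where
  toFun f z := ∑ i, f (z + g i)
  map_add' f f' := by ext z; simp [sum_add_distrib]
  map_smul' a f := by ext z; simp [mul_sum]

@[simp]
theorem cayleyAdj_apply (g : ι → V) (f : V → ZMod 2) (z : V) :
    cayleyAdj g f z = ∑ i, f (z + g i) := rfl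

variable [DecidableEq V]

theorem cayleyAdj_single_apply [Module (ZMod 2) V] {g : ι → V} (hg : Injective g) (z y : V) :
    cayleyAdj g (Pi.single z 1) y = if z + y ∈ Set.range g then 1 else 0 := by
  have hiff : ∀ i, y + g i = z ↔ g i = z + y := fun i => by
    rw [← ZModModule.sub_eq_add z y, eq_sub_iff_add_eq, add_comm]
  simp only [cayleyAdj_apply, Pi.single_apply, hiff, Set.mem_range]
  split_ifs with h
  · obtain ⟨i, hi⟩ := h
    rw [sum_eq_single i (fun j _ hj => if_neg fun hj' => hj (hg (hj'.trans hi.symm))) (by simp),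
      if_pos hi]
  · exact sum_eq_zero fun i _ => if_neg fun hi => h ⟨i, hi⟩

variable [Fintype V]

theorem range_cayleyAdj (g : ι → V) :
    LinearMap.range (cayleyAdj g) =
      Submodule.span (ZMod 2) (Set.range fun z => cayleyAdj g (Pi.single z 1)) := by
  have hspan : Submodule.span (ZMod 2) (Set.range fun z : V => Pi.single z (1 : ZMod 2)) = ⊤ := by
    convert (Pi.basisFun (ZMod 2) V).span_eq
    exact (Pi.basisFun_apply _ _ _).symm
  rw [Set.range_comp' (cayleyAdj g), Submodule.span_image, hspan, LinearMap.range_eq_map]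

variable [Module (ZMod 2) V]

theorem sum_mul_cayleyAdj_single (g : ι → V) (f : V → ZMod 2) (z : V) :
    ∑ y, f y * cayleyAdj g (Pi.single z 1) y = cayleyAdj g f z := by
  have hiff : ∀ y i, y + g i = z ↔ y = z + g i := fun y i => by
    rw [← ZModModule.sub_eq_add z, eq_sub_iff_add_eq]
  simp only [cayleyAdj_apply, Pi.single_apply, hiff, mul_sum, mul_ite, mul_one, mul_zero]
  rw [sum_comm]
  simp

end Cayley

section Pushforward

variable {V V' : Type*} [AddCommGroup V] [DecidableEq V] [AddCommGroup V'] [Fintype V']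

def pushforward (ψ : V' → V) (b : V' → ZMod 2) (y : V) : ZMod 2 :=
  ∑ u with ψ u = y, b u

theorem cayleyAdj_pushforward [Module (ZMod 2) V] [Module (ZMod 2) V'] {ι : Type*} [Fintype ι]
    {g : ι → V} {g' : ι → V'} {ψ : V' → V}
    (hψ : ∀ u i, ψ (u + g' i) = ψ u + g i) (b : V' → ZMod 2) :
    cayleyAdj g (pushforward ψ b) = pushforward ψ (cayleyAdj g' b) := by
  ext z
  simp only [cayleyAdj_apply, pushforward]
  rw [sum_comm]
  refine sum_congr rfl fun i _ => ?_
  refine sum_nbij' (· + g' i) (· + g' i) ?_ ?_ ?_ ?_ ?_ <;>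
    simp only [mem_filter, mem_univ, true_and, hψ] <;> intro u hu <;>
    simp [hu, add_assoc, ZModModule.add_self]

end Pushforward

section Cube

variable {ι : Type*} [Fintype ι] [DecidableEq ι]

theorem ker_cayleyAdj_single_le_range [Nonempty ι] :
    LinearMap.ker (cayleyAdj fun i : ι => (Pi.single i 1 : ι → ZMod 2)) ≤
      LinearMap.range (cayleyAdj fun i : ι => (Pi.single i 1 : ι → ZMod 2)) := by
  intro f hf
  obtain ⟨i₀⟩ := ‹Nonempty ι›
  set e : ι → ι → ZMod 2 := fun i => Pi.single i 1
  have hf' : ∀ v, ∑ i, f (v + e i) = 0 := fun v => congrFun (LinearMap.mem_ker.1 hf) v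
  have he : ∀ v i, (v + e i) i₀ = v i₀ + if i = i₀ then 1 else 0 := fun v i => by
    simp [e, Pi.single_apply, eq_comm]
  have hee : ∀ v i, v + e i + e i = v := fun v i => by
    rw [add_assoc, ZModModule.add_self, add_zero]
  -- `b u = f (u + e i₀)` on the half-cube `u i₀ = 0`: at `v` with `v i₀ = 1` only the neighbour
  -- `v + e i₀` counts, and for `v i₀ = 0` the sum is `A f (v + e i₀) + f v`.
  refine ⟨fun u => if u i₀ = 0 then f (u + e i₀) else 0, funext fun v => ?_⟩
  simp only [cayleyAdj_apply, he]
  obtain hv | hv := ZMod.eq_zero_or_eq_one_of_two (v i₀)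
  · have hterm : ∀ i, (if v i₀ + (if i = i₀ then 1 else 0) = 0 then f (v + e i + e i₀) else 0) =
        f (v + e i₀ + e i) + if i = i₀ then f v else 0 := fun i => by
      by_cases hi : i = i₀
      · subst hi; simp [hv, hee, ZModModule.add_self]
      · simp [hv, hi, add_right_comm]
    rw [sum_congr rfl fun i _ => hterm i, sum_add_distrib, hf', sum_ite_eq', if_pos (mem_univ _),
      zero_add]
  · rw [sum_eq_single i₀ (fun i _ hi => by simp [hv, hi]) (by simp)]
    simp [hv, hee, ZModModule.add_self]

end Cube

section LinearCombination

variable {V : Type*} [AddCommGroup V] [Module (ZMod 2) V] {ι : Type*} [Fintype ι] {g : ι → V}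

local notation "φ" => Fintype.linearCombination (ZMod 2) g

theorem eq_of_linearCombination_eq_of_hammingNorm_add_lt {d : ℕ}
    (hd : ∀ a, a ≠ 0 → φ a = 0 → d ≤ hammingNorm a)
    {u v : ι → ZMod 2} (huv : hammingNorm u + hammingNorm v < d)
    (h : φ u = φ v) : u = v := by
  by_contra hne
  have hdist : hammingDist u v ≤ hammingNorm u + hammingNorm v := by
    simpa [hammingDist_zero_right, hammingDist_comm 0 v] using hammingDist_triangle u 0 v
  have := hd (v - u) (sub_ne_zero.2 (Ne.symm hne)) (by rw [map_sub, h, sub_self])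
  rw [hammingDist_eq_hammingNorm, neg_add_eq_sub] at hdist
  omega

variable [DecidableEq ι]

theorem exists_hammingNorm_le_length_of_forall_mem_range {l : List V}
    (hl : ∀ s ∈ l, s ∈ Set.range g) :
    ∃ u : ι → ZMod 2, hammingNorm u ≤ l.length ∧ φ u = l.sum := by
  induction l with
  | nil => exact ⟨0, by simp⟩
  | cons s l ih =>
    obtain ⟨u, hu, hφu⟩ := ih fun s hs => hl s (List.mem_cons_of_mem _ hs)
    obtain ⟨i, rfl⟩ := hl s List.mem_cons_self
    refine ⟨u + Pi.single i 1, ?_, by simp [hφu, add_comm]⟩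
    have := hammingNorm_add_single_le u i 1
    simp only [List.length_cons]
    omega

theorem three_le_hammingNorm_of_linearCombination_eq_zero (hg : Injective g) (hg0 : ∀ i, g i ≠ 0)
    {a : ι → ZMod 2} (ha : a ≠ 0) (h : φ a = 0) :
    3 ≤ hammingNorm a := by
  have hsum : ∑ i with a i ≠ 0, g i = 0 := by
    rw [← h, Fintype.linearCombination_apply, sum_filter]
    refine sum_congr rfl fun i _ => ?_
    obtain hi | hi := ZMod.eq_zero_or_eq_one_of_two (a i)
    all_goals simp [hi]
  have hpos := hammingNorm_pos_iff.2 ha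
  by_contra! hlt
  obtain hcard | hcard : hammingNorm a = 1 ∨ hammingNorm a = 2 := by omega
  · obtain ⟨i, hs⟩ := card_eq_one.1 hcard
    rw [hs, sum_singleton] at hsum
    exact hg0 i hsum
  · obtain ⟨i, j, hij, hs⟩ := card_eq_two.1 hcard
    rw [hs, sum_pair hij, add_eq_zero_iff_eq_neg, ZModModule.neg_eq_self] at hsum
    exact hij (hg hsum)

end LinearCombination

section SupportInBall

variable {V : Type*} [AddCommGroup V] [Module (ZMod 2) V] {ι : Type*} [Fintype ι]
  {g : ι → V} {d r : ℕ} {c : V → ZMod 2} {x : V}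

local notation "φ" => Fintype.linearCombination (ZMod 2) g

def truncatedPullback (g : ι → V) (x : V) (r : ℕ) (c : V → ZMod 2) (u : ι → ZMod 2) : ZMod 2 :=
  if hammingNorm u ≤ r then c (x + Fintype.linearCombination (ZMod 2) g u) else 0

theorem truncatedPullback_eq_of_hammingNorm_le
    (hd : ∀ a, a ≠ 0 → φ a = 0 → d ≤ hammingNorm a)
    (hr : 2 * r + 3 ≤ d)
    (hsupp : ∀ y, c y ≠ 0 → ∃ v, hammingNorm v ≤ r ∧ x + φ v = y)
    {u : ι → ZMod 2} (hu : hammingNorm u ≤ r + 2) :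
    truncatedPullback g x r c u = c (x + φ u) := by
  unfold truncatedPullback
  split_ifs with hur
  · rfl
  by_contra! hc
  obtain ⟨v, hv, hxv⟩ := hsupp _ hc.symm
  have := eq_of_linearCombination_eq_of_hammingNorm_add_lt hd (u := u) (v := v) (by omega)
    (add_left_cancel hxv).symm
  exact hur (this ▸ hv)

variable [DecidableEq ι]

theorem cayleyAdj_truncatedPullback
    (hd : ∀ a, a ≠ 0 → φ a = 0 → d ≤ hammingNorm a)
    (hr : 2 * r + 3 ≤ d) (hc : cayleyAdj g c = 0)
    (hsupp : ∀ y, c y ≠ 0 → ∃ v, hammingNorm v ≤ r ∧ x + φ v = y) :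
    cayleyAdj (fun i => Pi.single i 1) (truncatedPullback g x r c) = 0 := by
  ext u
  rw [cayleyAdj_apply, Pi.zero_apply]
  by_cases hu : hammingNorm u ≤ r + 1
  · calc _ = ∑ i, c (x + φ u + g i) := by
          refine sum_congr rfl fun i _ => ?_
          rw [truncatedPullback_eq_of_hammingNorm_le hd hr hsupp
            ((hammingNorm_add_single_le u i 1).trans (by omega))]
          simp [add_assoc]
      _ = 0 := congrFun hc _
  · refine sum_eq_zero fun i _ => if_neg ?_
    have := hammingNorm_le_hammingNorm_add_single u i 1
    omega

variable [DecidableEq V]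

theorem pushforward_truncatedPullback
    (hd : ∀ a, a ≠ 0 → φ a = 0 → d ≤ hammingNorm a)
    (hr : 2 * r + 3 ≤ d)
    (hsupp : ∀ y, c y ≠ 0 → ∃ v, hammingNorm v ≤ r ∧ x + φ v = y) :
    pushforward (fun u => x + φ u) (truncatedPullback g x r c) = c := by
  ext y
  unfold pushforward truncatedPullback
  by_cases hy : c y = 0
  · rw [hy]
    refine sum_eq_zero fun u hu => ?_
    simp [(mem_filter.1 hu).2, hy]
  obtain ⟨v, hv, rfl⟩ := hsupp y hy
  rw [sum_eq_single_of_mem v (by simp), if_pos hv]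
  intro u hu huv
  refine if_neg fun hur => huv ?_
  exact eq_of_linearCombination_eq_of_hammingNorm_add_lt hd (u := u) (v := v) (by omega)
    (add_left_cancel (mem_filter.1 hu).2)

theorem mem_range_cayleyAdj_of_support_subset [Nonempty ι]
    (hd : ∀ a, a ≠ 0 → φ a = 0 → d ≤ hammingNorm a)
    (hr : 2 * r + 3 ≤ d) (hc : cayleyAdj g c = 0)
    (hsupp : ∀ y, c y ≠ 0 → ∃ v, hammingNorm v ≤ r ∧ x + φ v = y) :
    c ∈ LinearMap.range (cayleyAdj g) := by
  obtain ⟨b, hb⟩ := ker_cayleyAdj_single_le_range (cayleyAdj_truncatedPullback hd hr hc hsupp)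
  refine ⟨pushforward (fun u => x + φ u) b, ?_⟩
  rw [cayleyAdj_pushforward (g' := fun i => Pi.single i 1) (fun u i => by simp [add_assoc]), hb,
    pushforward_truncatedPullback hd hr hsupp]

end SupportInBall

open Classical in
theorem stmt12_general (m w : ℕ) (hmpos : 1 ≤ m)
    (W : Fin w → (Fin m → ZMod 2)) (hWinj : Function.Injective W)
    (hWne : ∀ j, W j ≠ 0)
    (hWnotbasis : ∀ j i, W j ≠ Pi.single i 1)
    (T : Set (Fin m → ZMod 2))
    (hT : T = Set.range (fun i : Fin m => Pi.single i (1 : ZMod 2)) ∪ Set.range W)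
    (M : Matrix (Fin m → ZMod 2) (Fin m → ZMod 2) (ZMod 2))
    (hM : ∀ x y, M x y = if x + y ∈ T then 1 else 0)
    (d : ℕ)
    (hd : IsLeast {k | ∃ a : (Fin m ⊕ Fin w) → ZMod 2, a ≠ 0 ∧
      (∑ i, a i • (Sum.elim (fun i : Fin m => Pi.single i (1 : ZMod 2)) W) i) = 0 ∧
      hammingNorm a = k} d)
    (c : (Fin m → ZMod 2) → ZMod 2)
    (horth : ∀ v ∈ Submodule.span (ZMod 2) (Set.range M), ∑ y, c y * v y = 0)
    (hnotin : c ∉ Submodule.span (ZMod 2) (Set.range M)) :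
    ∀ x : Fin m → ZMod 2, ∃ y, c y ≠ 0 ∧
      ¬ ∃ l : List (Fin m → ZMod 2), (∀ s ∈ l, s ∈ T) ∧
          l.length ≤ (d - 1) / 2 - 2 ∧ x + l.sum = y := by
  set g := Sum.elim (fun i : Fin m => Pi.single i (1 : ZMod 2)) W
  have hsingle : Injective fun i : Fin m => (Pi.single i 1 : Fin m → ZMod 2) :=
    fun i j h => by simpa [Pi.single_apply, eq_comm] using congrFun h j
  have hg : Injective g := hsingle.sumElim hWinj fun i j => (hWnotbasis j i).symm
  have hTg : T = Set.range g := by rw [hT, Set.Sum.elim_range]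
  have hC : Submodule.span (ZMod 2) (Set.range M) = LinearMap.range (cayleyAdj g) := by
    rw [range_cayleyAdj]
    congr
    ext z y
    rw [hM, cayleyAdj_single_apply hg, hTg]
    congr
  have hc : cayleyAdj g c = 0 := funext fun z => by
    rw [← sum_mul_cayleyAdj_single]
    exact horth _ (hC ▸ ⟨Pi.single z 1, rfl⟩)
  have hd3 : 3 ≤ d := by
    obtain ⟨a, ha, hrel, rfl⟩ := hd.1
    exact three_le_hammingNorm_of_linearCombination_eq_zero hg
      (Sum.forall.2 ⟨fun i => by simp [g], hWne⟩) ha hrel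
  have : Nonempty (Fin m ⊕ Fin w) := ⟨.inl ⟨0, hmpos⟩⟩
  intro x
  by_contra! hball
  refine hnotin (hC ▸ mem_range_cayleyAdj_of_support_subset (x := x) (r := (d - 1) / 2 - 2)
    (fun a ha h => hd.2 ⟨a, ha, h, rfl⟩) (by omega) hc fun y hy => ?_)
  obtain ⟨l, hl, hlen, rfl⟩ := hball y hy
  obtain ⟨u, hu, hφu⟩ := exists_hammingNorm_le_length_of_forall_mem_range (g := g) (hTg ▸ hl)
  exact ⟨u, hu.trans hlen, by rw [hφu]⟩

open Classical in
/-- let `m` be even, `W` a family of `w` distinct nonzero non-basis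
vectors of `F₂^m` with `n = m + w` even, `M` the adjacency matrix of the Cayley graph
of `(F₂^m, Sₘ ∪ W)` and `C` its row space. If `c ∈ C^⊥ \ C` and `d` is the minimum
distance of the code whose parity-check matrix has columns `Sₘ ∪ W` (i.e. the minimum
weight of a nonzero linear relation among the generators), then the support of `c` is
contained in no ball of radius `⌊(d-1)/2⌋ - 2` for the Cayley graph metric. -/
theorem stmt12 (m w : ℕ) (hm : Even m) (hmpos : 1 ≤ m) (hn : Even (m + w))
    (W : Fin w → (Fin m → ZMod 2)) (hWinj : Function.Injective W)
    (hWne : ∀ j, W j ≠ 0)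
    (hWnotbasis : ∀ j i, W j ≠ Pi.single i 1)
    (T : Set (Fin m → ZMod 2))
    (hT : T = Set.range (fun i : Fin m => Pi.single i (1 : ZMod 2)) ∪ Set.range W)
    (M : Matrix (Fin m → ZMod 2) (Fin m → ZMod 2) (ZMod 2))
    (hM : ∀ x y, M x y = if x + y ∈ T then 1 else 0)
    (d : ℕ)
    (hd : IsLeast {k | ∃ a : (Fin m ⊕ Fin w) → ZMod 2, a ≠ 0 ∧
      (∑ i, a i • (Sum.elim (fun i : Fin m => Pi.single i (1 : ZMod 2)) W) i) = 0 ∧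
      hammingNorm a = k} d)
    (c : (Fin m → ZMod 2) → ZMod 2)
    (horth : ∀ v ∈ Submodule.span (ZMod 2) (Set.range M), ∑ y, c y * v y = 0)
    (hnotin : c ∉ Submodule.span (ZMod 2) (Set.range M)) :
    ∀ x : Fin m → ZMod 2, ∃ y, c y ≠ 0 ∧
      ¬ ∃ l : List (Fin m → ZMod 2), (∀ s ∈ l, s ∈ T) ∧
          l.length ≤ (d - 1) / 2 - 2 ∧ x + l.sum = y :=
  stmt12_general m w hmpos W hWinj hWne hWnotbasis T hT M hM d hd c horth hnotin
end

section
/- Let n ≥ 3 and let Mₙ denote the 2ⁿ×2ⁿ adjacency matrix (over F₂, vertices sorted lexicographically as binary expansions) of the Cayley graph of (F₂ⁿ, Sₙ ∪ {(1,…,1)}). Then M_{n+1} has the block form [[Mₙ + J, I + J],[I + J, Mₙ + J]], where I and J are the 2ⁿ×2ⁿ identity and anti-diagonal matrices. -/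
/-- The vector of `F₂ⁿ` whose binary expansion is `p` (bit `i` is the `i`-th
binary digit of `p`); this realizes the lexicographic ordering of `F₂ⁿ`. -/
def bitsVec (n : ℕ) (p : Fin (2 ^ n)) : Fin n → ZMod 2 :=
  fun i => (((p : ℕ) / 2 ^ (i : ℕ)) % 2 : ℕ)

/-- The adjacency matrix, with vertices sorted lexicographically as binary
expansions, of the Cayley graph of `(F₂ⁿ, Sₙ ∪ {(1,…,1)})`. -/
def cayM (n : ℕ) : Matrix (Fin (2 ^ n)) (Fin (2 ^ n)) (ZMod 2) :=
  fun p q =>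
    if (∃ i, bitsVec n q = bitsVec n p + Pi.single i 1) ∨
        bitsVec n q = bitsVec n p + (fun _ => 1) then 1 else 0

/-- The `s × s` anti-diagonal matrix over `F₂`. -/
def antiJ (s : ℕ) : Matrix (Fin s) (Fin s) (ZMod 2) :=
  fun i j => if (i : ℕ) + (j : ℕ) + 1 = s then 1 else 0

theorem pow2succ (n : ℕ) : 2 ^ (n + 1) = 2 ^ n + 2 ^ n := by
  rw [pow_succ, mul_two]

namespace Stmt15Aux

lemma snoc_eq_snoc_iff {n : ℕ} {a b : Fin n → ZMod 2} {x y : ZMod 2} :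
    (Fin.snoc a x : Fin (n + 1) → ZMod 2) = Fin.snoc b y ↔ a = b ∧ x = y := by
  constructor
  · intro h
    refine ⟨funext fun j => ?_, ?_⟩
    · have := congrFun h (Fin.castSucc j); simpa using this
    · have := congrFun h (Fin.last n); simpa using this
  · rintro ⟨rfl, rfl⟩; rfl

lemma snoc_add {n : ℕ} (a b : Fin n → ZMod 2) (x y : ZMod 2) :
    (Fin.snoc a x : Fin (n + 1) → ZMod 2) + Fin.snoc b y = Fin.snoc (a + b) (x + y) := by
  funext i
  induction i using Fin.lastCases with
  | last => simp
  | cast j => simp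

lemma single_castSucc {n : ℕ} (i : Fin n) :
    (Pi.single (Fin.castSucc i) 1 : Fin (n + 1) → ZMod 2) = Fin.snoc (Pi.single i 1) 0 := by
  funext j
  induction j using Fin.lastCases with
  | last => simp [Pi.single_apply, (Fin.castSucc_lt_last i).ne']
  | cast j => simp [Pi.single_apply, Fin.castSucc_inj]

lemma single_last {n : ℕ} :
    (Pi.single (Fin.last n) 1 : Fin (n + 1) → ZMod 2) = Fin.snoc (0 : Fin n → ZMod 2) 1 := by
  funext j
  induction j using Fin.lastCases with
  | last => simp
  | cast j => simp [Pi.single_apply, (Fin.castSucc_lt_last j).ne]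

lemma ones_succ {n : ℕ} :
    (fun _ : Fin (n + 1) => (1 : ZMod 2)) = Fin.snoc (fun _ => 1) 1 := by
  funext j
  induction j using Fin.lastCases with
  | last => simp
  | cast j => simp

lemma bitsVec_low {n : ℕ} (p : Fin (2 ^ (n + 1))) (a : Fin (2 ^ n)) (h : (p : ℕ) = a) :
    bitsVec (n + 1) p = Fin.snoc (bitsVec n a) 0 := by
  funext i
  induction i using Fin.lastCases with
  | last =>
      have h0 : (p : ℕ) / 2 ^ n = 0 := Nat.div_eq_of_lt (h ▸ a.isLt)
      simp [bitsVec, h0]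
  | cast j => simp [bitsVec, h]

lemma bitsVec_high {n : ℕ} (p : Fin (2 ^ (n + 1))) (a : Fin (2 ^ n))
    (h : (p : ℕ) = 2 ^ n + a) :
    bitsVec (n + 1) p = Fin.snoc (bitsVec n a) 1 := by
  funext i
  induction i using Fin.lastCases with
  | last =>
      have h0 : (a : ℕ) / 2 ^ n = 0 := Nat.div_eq_of_lt a.isLt
      have h1 : (p : ℕ) / 2 ^ n = 1 := by
        rw [h, Nat.add_comm, Nat.add_div_right _ (Nat.two_pow_pos n), h0]
      simp [bitsVec, h1]
  | cast j =>
      have hj : (j : ℕ) < n := j.isLt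
      have e1 : 2 ^ n = 2 ^ (j : ℕ) * 2 ^ (n - (j : ℕ)) := by
        rw [← pow_add]; congr 1; omega
      have e2 : 2 ^ (n - (j : ℕ)) = 2 * 2 ^ (n - (j : ℕ) - 1) := by
        rw [← pow_succ']; congr 1; omega
      have key : ∀ m : ℕ, m = 2 ^ (j : ℕ) * 2 ^ (n - (j : ℕ)) →
          (m + (a : ℕ)) / 2 ^ (j : ℕ) = (a : ℕ) / 2 ^ (j : ℕ) + 2 ^ (n - (j : ℕ)) := by
        rintro _ rfl
        rw [Nat.add_comm]
        exact Nat.add_mul_div_left _ _ (Nat.two_pow_pos _)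
      have hdiv : (p : ℕ) / 2 ^ (j : ℕ) = (a : ℕ) / 2 ^ (j : ℕ) + 2 ^ (n - (j : ℕ)) := by
        rw [h]; exact key _ e1
      have hmod : (p : ℕ) / 2 ^ (j : ℕ) % 2 = (a : ℕ) / 2 ^ (j : ℕ) % 2 := by
        rw [hdiv, e2]; omega
      simp [bitsVec, hmod]

lemma comp_div {n : ℕ} (a b : ℕ) (h : a + b + 1 = 2 ^ n) :
    ∀ i ≤ n, a / 2 ^ i + b / 2 ^ i + 1 = 2 ^ (n - i) := by
  intro i
  induction i with
  | zero => intro _; simpa using h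
  | succ i ih =>
      intro hi
      have h1 := ih (by omega)
      have e : 2 ^ (n - i) = 2 * 2 ^ (n - (i + 1)) := by
        rw [← pow_succ']; congr 1; omega
      have ea : a / 2 ^ (i + 1) = a / 2 ^ i / 2 := by
        rw [Nat.div_div_eq_div_mul, ← pow_succ]
      have eb : b / 2 ^ (i + 1) = b / 2 ^ i / 2 := by
        rw [Nat.div_div_eq_div_mul, ← pow_succ]
      rw [ea, eb]
      omega

lemma bitsVec_injective (n : ℕ) : Function.Injective (bitsVec n) := by
  intro a b h
  apply Fin.val_injective
  apply Nat.eq_of_testBit_eq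
  intro i
  by_cases hi : i < n
  · have hf := congrFun h ⟨i, hi⟩
    simp only [bitsVec] at hf
    have hv := congrArg ZMod.val hf
    rw [ZMod.val_natCast, ZMod.val_natCast] at hv
    have h2 : (a : ℕ) / 2 ^ i % 2 = (b : ℕ) / 2 ^ i % 2 := by omega
    simp [Nat.testBit_eq_decide_div_mod_eq, h2]
  · have ha : (a : ℕ) < 2 ^ i :=
      lt_of_lt_of_le a.isLt (Nat.pow_le_pow_right (by norm_num) (le_of_not_gt hi))
    have hb : (b : ℕ) < 2 ^ i :=
      lt_of_lt_of_le b.isLt (Nat.pow_le_pow_right (by norm_num) (le_of_not_gt hi))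
    rw [Nat.testBit_lt_two_pow ha, Nat.testBit_lt_two_pow hb]

lemma bits_eq_iff {n : ℕ} (a b : Fin (2 ^ n)) :
    bitsVec n b = bitsVec n a ↔ a = b := by
  rw [(bitsVec_injective n).eq_iff, eq_comm]

lemma comp_iff {n : ℕ} (hn : 1 ≤ n) (a b : Fin (2 ^ n)) :
    bitsVec n b = bitsVec n a + (fun _ => 1) ↔ (a : ℕ) + (b : ℕ) + 1 = 2 ^ n := by
  have key : ∀ a b : Fin (2 ^ n), (a : ℕ) + (b : ℕ) + 1 = 2 ^ n →
      bitsVec n b = bitsVec n a + fun _ => 1 := by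
    intro a b h
    funext i
    have hd := comp_div (a : ℕ) (b : ℕ) h i (le_of_lt i.isLt)
    have e : 2 ^ (n - (i : ℕ)) = 2 * 2 ^ (n - (i : ℕ) - 1) := by
      rw [← pow_succ']; congr 1; omega
    have hcase : (a : ℕ) / 2 ^ (i : ℕ) % 2 = 0 ∧ (b : ℕ) / 2 ^ (i : ℕ) % 2 = 1 ∨
        (a : ℕ) / 2 ^ (i : ℕ) % 2 = 1 ∧ (b : ℕ) / 2 ^ (i : ℕ) % 2 = 0 := by omega
    simp only [bitsVec, Pi.add_apply]
    rcases hcase with ⟨h1, h2⟩ | ⟨h1, h2⟩ <;> rw [h1, h2] <;> decide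
  constructor
  · intro h
    have hb : (2 ^ n - 1 - (a : ℕ)) < 2 ^ n := by
      have := Nat.two_pow_pos n; omega
    set c : Fin (2 ^ n) := ⟨2 ^ n - 1 - (a : ℕ), hb⟩ with hc
    have hac : (a : ℕ) + (c : ℕ) + 1 = 2 ^ n := by
      have := a.isLt; simp only [hc]; omega
    have := key a c hac
    have hcb : c = b := bitsVec_injective n (this.trans h.symm)
    rw [← hcb]; exact hac
  · exact key a b

lemma exists_iff_same {n : ℕ} (u v : Fin n → ZMod 2) (x : ZMod 2) :
    (∃ i : Fin (n + 1),
        (Fin.snoc v x : Fin (n + 1) → ZMod 2) = Fin.snoc u x + Pi.single i 1) ↔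
      ∃ j : Fin n, v = u + Pi.single j 1 := by
  constructor
  · rintro ⟨i, hi⟩
    induction i using Fin.lastCases with
    | last =>
        rw [single_last, snoc_add, snoc_eq_snoc_iff] at hi
        exact absurd hi.2 (by simp)
    | cast j =>
        rw [single_castSucc, snoc_add, snoc_eq_snoc_iff] at hi
        exact ⟨j, hi.1⟩
  · rintro ⟨j, hj⟩
    exact ⟨Fin.castSucc j, by
      rw [single_castSucc, snoc_add, snoc_eq_snoc_iff]; exact ⟨hj, by simp⟩⟩

lemma exists_iff_cross {n : ℕ} (u v : Fin n → ZMod 2) (x y : ZMod 2) (hxy : y = x + 1) :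
    (∃ i : Fin (n + 1),
        (Fin.snoc v y : Fin (n + 1) → ZMod 2) = Fin.snoc u x + Pi.single i 1) ↔ v = u := by
  constructor
  · rintro ⟨i, hi⟩
    induction i using Fin.lastCases with
    | last =>
        rw [single_last, snoc_add, snoc_eq_snoc_iff] at hi
        have := hi.1; simpa using this
    | cast j =>
        rw [single_castSucc, snoc_add, snoc_eq_snoc_iff] at hi
        exact absurd (hxy ▸ hi.2) (by simp)
  · rintro rfl
    exact ⟨Fin.last n, by
      rw [single_last, snoc_add, snoc_eq_snoc_iff]
      exact ⟨by simp, hxy⟩⟩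

lemma ones_iff_same {n : ℕ} (u v : Fin n → ZMod 2) (x : ZMod 2) :
    ((Fin.snoc v x : Fin (n + 1) → ZMod 2) = Fin.snoc u x + fun _ => 1) ↔ False := by
  rw [ones_succ, snoc_add, snoc_eq_snoc_iff]
  simp

lemma ones_iff_cross {n : ℕ} (u v : Fin n → ZMod 2) (x y : ZMod 2) (hxy : y = x + 1) :
    ((Fin.snoc v y : Fin (n + 1) → ZMod 2) = Fin.snoc u x + fun _ => 1) ↔
      v = u + fun _ => 1 := by
  rw [ones_succ, snoc_add, snoc_eq_snoc_iff]
  simp [hxy]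

lemma not_E_and_A {n : ℕ} (hn : 2 ≤ n) (a b : Fin n → ZMod 2) :
    ¬ ((∃ j, b = a + Pi.single j 1) ∧ b = a + fun _ => 1) := by
  rintro ⟨⟨j, hj⟩, hA⟩
  have h2 : (Pi.single j 1 : Fin n → ZMod 2) = fun _ => 1 :=
    add_left_cancel (hj.symm.trans hA)
  have : Nontrivial (Fin n) := Fin.nontrivial_iff_two_le.mpr hn
  obtain ⟨i, hi⟩ := exists_ne j
  have := congrFun h2 i
  simp [Pi.single_apply, hi] at this

lemma not_eq_and_ones {n : ℕ} (hn : 1 ≤ n) (a b : Fin (2 ^ n)) :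
    ¬ (a = b ∧ bitsVec n b = bitsVec n a + fun _ => 1) := by
  rintro ⟨rfl, h⟩
  have := congrFun h ⟨0, by positivity⟩
  simp at this

lemma ite_helper1 {E A : Prop} [Decidable E] [Decidable A] (h : ¬(E ∧ A)) :
    (if E then (1 : ZMod 2) else 0) =
      (if E ∨ A then 1 else 0) + (if A then 1 else 0) := by
  by_cases hE : E
  · by_cases hA : A
    · exact absurd ⟨hE, hA⟩ h
    · simp [hE, hA]
  · by_cases hA : A
    · simp only [hE, hA, if_false, if_true, or_true]; decide
    · simp [hE, hA]

lemma ite_helper2 {E A : Prop} [Decidable E] [Decidable A] (h : ¬(E ∧ A)) :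
    (if E ∨ A then (1 : ZMod 2) else 0) =
      (if E then 1 else 0) + (if A then 1 else 0) := by
  by_cases hE : E
  · by_cases hA : A
    · exact absurd ⟨hE, hA⟩ h
    · simp [hE, hA]
  · by_cases hA : A <;> simp [hE, hA]

end Stmt15Aux

open Stmt15Aux in
/-- for `n ≥ 3`, the matrix `M_{n+1}` has the block form
`[[Mₙ + J, I + J], [I + J, Mₙ + J]]`. -/
theorem stmt15 (n : ℕ) (hn : 3 ≤ n) :
    cayM (n + 1) =
      (Matrix.fromBlocks (cayM n + antiJ (2 ^ n)) (1 + antiJ (2 ^ n))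
          (1 + antiJ (2 ^ n)) (cayM n + antiJ (2 ^ n))).submatrix
        (fun p => finSumFinEquiv.symm (Fin.cast (pow2succ n) p))
        (fun p => finSumFinEquiv.symm (Fin.cast (pow2succ n) p)) := by
  have hn1 : 1 ≤ n := by omega
  have hn2 : 2 ≤ n := by omega
  funext p q
  rw [Matrix.submatrix_apply]
  rcases hp : finSumFinEquiv.symm (Fin.cast (pow2succ n) p) with a | a <;>
    rcases hq : finSumFinEquiv.symm (Fin.cast (pow2succ n) q) with b | b
  · have hp' : (p : ℕ) = (a : ℕ) := by
      have h1 := congrArg (fun s => (finSumFinEquiv s : ℕ)) hp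
      simpa using h1
    have hq' : (q : ℕ) = (b : ℕ) := by
      have h1 := congrArg (fun s => (finSumFinEquiv s : ℕ)) hq
      simpa using h1
    rw [Matrix.fromBlocks_apply₁₁, Matrix.add_apply]
    simp only [cayM, antiJ]
    rw [bitsVec_low p a hp', bitsVec_low q b hq']
    simp only [exists_iff_same, ones_iff_same, or_false, ← comp_iff hn1 a b]
    exact ite_helper1 (not_E_and_A hn2 _ _)
  · have hp' : (p : ℕ) = (a : ℕ) := by
      have h1 := congrArg (fun s => (finSumFinEquiv s : ℕ)) hp
      simpa using h1
    have hq' : (q : ℕ) = 2 ^ n + (b : ℕ) := by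
      have h1 := congrArg (fun s => (finSumFinEquiv s : ℕ)) hq
      simp at h1; omega
    rw [Matrix.fromBlocks_apply₁₂, Matrix.add_apply, Matrix.one_apply]
    simp only [cayM, antiJ]
    rw [bitsVec_low p a hp', bitsVec_high q b hq']
    simp only [exists_iff_cross _ _ (0 : ZMod 2) 1 (by decide),
      ones_iff_cross _ _ (0 : ZMod 2) 1 (by decide),
      ← comp_iff hn1 a b, bits_eq_iff]
    exact ite_helper2 (not_eq_and_ones hn1 a b)
  · have hp' : (p : ℕ) = 2 ^ n + (a : ℕ) := by
      have h1 := congrArg (fun s => (finSumFinEquiv s : ℕ)) hp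
      simp at h1; omega
    have hq' : (q : ℕ) = (b : ℕ) := by
      have h1 := congrArg (fun s => (finSumFinEquiv s : ℕ)) hq
      simpa using h1
    rw [Matrix.fromBlocks_apply₂₁, Matrix.add_apply, Matrix.one_apply]
    simp only [cayM, antiJ]
    rw [bitsVec_high p a hp', bitsVec_low q b hq']
    simp only [exists_iff_cross _ _ (1 : ZMod 2) 0 (by decide),
      ones_iff_cross _ _ (1 : ZMod 2) 0 (by decide),
      ← comp_iff hn1 a b, bits_eq_iff]
    exact ite_helper2 (not_eq_and_ones hn1 a b)
  · have hp' : (p : ℕ) = 2 ^ n + (a : ℕ) := by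
      have h1 := congrArg (fun s => (finSumFinEquiv s : ℕ)) hp
      simp at h1; omega
    have hq' : (q : ℕ) = 2 ^ n + (b : ℕ) := by
      have h1 := congrArg (fun s => (finSumFinEquiv s : ℕ)) hq
      simp at h1; omega
    rw [Matrix.fromBlocks_apply₂₂, Matrix.add_apply]
    simp only [cayM, antiJ]
    rw [bitsVec_high p a hp', bitsVec_high q b hq']
    simp only [exists_iff_same, ones_iff_same, or_false, ← comp_iff hn1 a b]
    exact ite_helper1 (not_E_and_A hn2 _ _)
end

section
/- Let n ≥ 3 and let Mₙ be the adjacency matrix of the Cayley graph of (F₂ⁿ, Sₙ ∪ {(1,…,1)}) in lexicographic order, J the 2ⁿ×2ⁿ anti-diagonal matrix. A vector c = (c₁,c₂,c₃,c₄) ∈ F₂^{2^{n+2}} (with cᵢ ∈ F₂^{2ⁿ}) lies in ker M_{n+2} if and only if there exist d₁, d₂ ∈ ker Mₙ with c₄ = c₁ + d₁, c₃ = c₂ + d₂, Mₙc₁ = d₂ + Jd₁, and Mₙc₂ = d₁ + Jd₂. -/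
/-- The vector `(c₁, c₂, c₃, c₄) ∈ F₂^(2^(n+2))` assembled from four blocks
`cᵢ ∈ F₂^(2ⁿ)`. -/
def quad (n : ℕ) (c₁ c₂ c₃ c₄ : Fin (2 ^ n) → ZMod 2) :
    Fin (2 ^ (n + 2)) → ZMod 2 :=
  fun p =>
    Sum.elim (Sum.elim c₁ c₂) (Sum.elim c₃ c₄)
      (Sum.map (fun q => finSumFinEquiv.symm (Fin.cast (pow2succ n) q))
        (fun q => finSumFinEquiv.symm (Fin.cast (pow2succ n) q))
        (finSumFinEquiv.symm (Fin.cast (pow2succ (n + 1)) p)))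

/-! ### Bit lemmas -/

lemma bitsVec_testBit (m : ℕ) (p : Fin (2^m)) (i : Fin m) :
    bitsVec m p i = if (p:ℕ).testBit i then 1 else 0 := by
  unfold bitsVec
  rw [Nat.testBit_eq_decide_div_mod_eq]
  rcases Nat.mod_two_eq_zero_or_one ((p:ℕ)/2^(i:ℕ)) with h | h <;> simp [h]

lemma bits_shift {m : ℕ} (p q : Fin (2^m)) (t : ℕ) (ht : t < 2^m) :
    (bitsVec m q = bitsVec m p + fun j : Fin m => if t.testBit j then 1 else 0) ↔
      (q:ℕ) = (p:ℕ) ^^^ t := by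
  constructor
  · intro h
    refine Nat.eq_of_testBit_eq fun j => ?_
    rcases lt_or_ge j m with hj | hj
    · have h2 := congrFun h ⟨j, hj⟩
      rw [bitsVec_testBit, Pi.add_apply, bitsVec_testBit] at h2
      rw [Nat.testBit_xor]
      revert h2
      cases hb : (q:ℕ).testBit j <;> cases hc : (p:ℕ).testBit j <;>
        cases hd : t.testBit j <;> simp
    · have h1 : (q:ℕ) < 2^j := lt_of_lt_of_le q.2 (Nat.pow_le_pow_right (by norm_num) hj)
      have h2 : (p:ℕ) ^^^ t < 2^j :=
        lt_of_lt_of_le (Nat.xor_lt_two_pow p.2 ht) (Nat.pow_le_pow_right (by norm_num) hj)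
      rw [Nat.testBit_lt_two_pow h1, Nat.testBit_lt_two_pow h2]
  · intro h
    funext j
    rw [bitsVec_testBit, Pi.add_apply, bitsVec_testBit, h, Nat.testBit_xor]
    cases hc : (p:ℕ).testBit j <;> cases hd : t.testBit (j:ℕ) <;> simp <;> decide

lemma two_pow_coe_lt {m : ℕ} (i : Fin m) : 2^(i:ℕ) < 2^m :=
  Nat.pow_lt_pow_right (by norm_num) i.2

lemma cond1_iff {m : ℕ} (p q : Fin (2^m)) (i : Fin m) :
    bitsVec m q = bitsVec m p + Pi.single i 1 ↔ (q:ℕ) = (p:ℕ) ^^^ 2^(i:ℕ) := by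
  rw [← bits_shift p q _ (two_pow_coe_lt i)]
  have : (Pi.single i 1 : Fin m → ZMod 2)
      = fun j : Fin m => if (2^(i:ℕ)).testBit j then 1 else 0 := by
    funext j
    rw [Pi.single_apply, Nat.testBit_two_pow]
    by_cases h : j = i
    · subst h; simp
    · rw [if_neg h, if_neg]
      simp only [decide_eq_true_eq]
      exact fun hc => h (Fin.ext hc.symm)
  rw [this]

lemma cond2_iff {m : ℕ} (p q : Fin (2^m)) :
    bitsVec m q = bitsVec m p + (fun _ => 1) ↔ (q:ℕ) = (p:ℕ) ^^^ (2^m - 1) := by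
  rw [← bits_shift p q _ (by have := Nat.two_pow_pos m; omega)]
  have : ((fun _ => 1) : Fin m → ZMod 2)
      = fun j : Fin m => if (2^m - 1).testBit j then 1 else 0 := by
    funext j
    rw [Nat.testBit_two_pow_sub_one, if_pos (by simpa using j.2)]
  rw [this]

lemma xor_left_cancel' {p a b : ℕ} (h : p ^^^ a = p ^^^ b) : a = b := by
  have h2 : p ^^^ (p ^^^ a) = p ^^^ (p ^^^ b) := by rw [h]
  rwa [← Nat.xor_assoc, ← Nat.xor_assoc, Nat.xor_self, Nat.zero_xor, Nat.zero_xor] at h2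

lemma cayM_apply {m : ℕ} (hm : 2 ≤ m) (p q : Fin (2^m)) :
    cayM m p q = (∑ i : Fin m, if (q:ℕ) = (p:ℕ) ^^^ 2^(i:ℕ) then (1:ZMod 2) else 0)
      + (if (q:ℕ) = (p:ℕ) ^^^ (2^m - 1) then 1 else 0) := by
  unfold cayM
  by_cases h2 : (q:ℕ) = (p:ℕ) ^^^ (2^m - 1)
  · have hno : ∀ i : Fin m, ¬ ((q:ℕ) = (p:ℕ) ^^^ 2^(i:ℕ)) := by
      intro i hi
      have he : 2^(i:ℕ) = 2^m - 1 := xor_left_cancel' (hi.symm.trans h2)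
      have e0 := congrArg (fun t => Nat.testBit t 0) he
      have e1 := congrArg (fun t => Nat.testBit t 1) he
      simp only [Nat.testBit_two_pow, Nat.testBit_two_pow_sub_one] at e0 e1
      rw [decide_eq_decide] at e0 e1
      have hi0 : (i:ℕ) = 0 := e0.mpr (by omega)
      have := e1.mpr (by omega)
      omega
    rw [if_pos (Or.inr ((cond2_iff p q).mpr h2)), if_pos h2,
      Finset.sum_eq_zero (fun i _ => if_neg (hno i)), zero_add]
  · by_cases h1 : ∃ i : Fin m, (q:ℕ) = (p:ℕ) ^^^ 2^(i:ℕ)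
    · obtain ⟨i₀, hi₀⟩ := h1
      rw [if_pos (Or.inl ⟨i₀, (cond1_iff p q i₀).mpr hi₀⟩), if_neg h2, add_zero]
      rw [Finset.sum_eq_single i₀]
      · rw [if_pos hi₀]
      · intro i _ hne
        rw [if_neg]
        intro hi
        exact hne (Fin.ext
          (Nat.pow_right_injective (le_refl 2) (xor_left_cancel' (hi.symm.trans hi₀))))
      · intro h; exact absurd (Finset.mem_univ i₀) h
    · rw [if_neg, if_neg h2, add_zero, Finset.sum_eq_zero]
      · intro i _
        rw [if_neg (fun hc => h1 ⟨i, hc⟩)]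
      · rintro (⟨i, hi⟩ | h)
        · exact h1 ⟨i, (cond1_iff p q i).mp hi⟩
        · exact h2 ((cond2_iff p q).mp h)

lemma sum_ite_val {s : ℕ} (v : ℕ) (hv : v < s) (x : Fin s → ZMod 2) :
    ∑ q : Fin s, (if (q:ℕ) = v then (1:ZMod 2) else 0) * x q = x ⟨v, hv⟩ := by
  rw [Finset.sum_eq_single ⟨v, hv⟩]
  · rw [if_pos rfl, one_mul]
  · intro q _ hne
    rw [if_neg (fun hc => hne (Fin.ext hc)), zero_mul]
  · intro h; exact absurd (Finset.mem_univ _) h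

lemma cayM_mulVec {m : ℕ} (hm : 2 ≤ m) (x : Fin (2^m) → ZMod 2) (p : Fin (2^m)) :
    (cayM m).mulVec x p
      = (∑ i : Fin m, x ⟨(p:ℕ) ^^^ 2^(i:ℕ), Nat.xor_lt_two_pow p.2 (two_pow_coe_lt i)⟩)
        + x ⟨(p:ℕ) ^^^ (2^m - 1),
            Nat.xor_lt_two_pow p.2 (by have := Nat.two_pow_pos m; omega)⟩ := by
  unfold Matrix.mulVec dotProduct
  simp only [cayM_apply hm, add_mul, Finset.sum_mul, Finset.sum_add_distrib]
  congr 1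
  · rw [Finset.sum_comm]
    exact Finset.sum_congr rfl fun i _ => sum_ite_val _ _ x
  · exact sum_ite_val _ _ x

lemma antiJ_mulVec {s : ℕ} (x : Fin s → ZMod 2) (i : Fin s) :
    (antiJ s).mulVec x i = x ⟨s - 1 - (i:ℕ), by have := i.2; omega⟩ := by
  unfold Matrix.mulVec dotProduct antiJ
  rw [Finset.sum_eq_single ⟨s - 1 - (i:ℕ), by have := i.2; omega⟩]
  · show (if (i:ℕ) + (s - 1 - (i:ℕ)) + 1 = s then (1:ZMod 2) else 0) * _ = _
    rw [if_pos (by have := i.2; omega), one_mul]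
  · intro q _ hne
    show (if (i:ℕ) + (q:ℕ) + 1 = s then (1:ZMod 2) else 0) * _ = 0
    rw [if_neg, zero_mul]
    intro hc
    exact hne (Fin.ext (by have := i.2; have := q.2; simp only [Fin.val_mk]; omega))
  · intro h; exact absurd (Finset.mem_univ _) h

/-! ### XOR arithmetic -/

lemma xor_all_ones {m r : ℕ} (hr : r < 2^m) : r ^^^ (2^m - 1) = 2^m - 1 - r := by
  refine Nat.eq_of_testBit_eq fun j => ?_
  have h1 : 2^m - 1 - r = 2^m - (r + 1) := by omega
  rw [Nat.testBit_xor, Nat.testBit_two_pow_sub_one, h1, Nat.testBit_two_pow_sub_succ hr]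
  rcases lt_or_ge j m with hj | hj
  · simp [hj]
  · rw [Nat.testBit_lt_two_pow (lt_of_lt_of_le hr (Nat.pow_le_pow_right (by norm_num) hj))]
    simp [Nat.not_lt.mpr hj]

lemma block_xor {n a u : ℕ} (b v : ℕ) (ha : a < 2^n) (hu : u < 2^n) :
    (a + 2^n * b) ^^^ (u + 2^n * v) = (a ^^^ u) + 2^n * (b ^^^ v) := by
  refine Nat.eq_of_testBit_eq fun j => ?_
  have h1 : a + 2^n*b = 2^n*b + a := by omega
  have h2 : u + 2^n*v = 2^n*v + u := by omega
  have h3 : (a ^^^ u) + 2^n*(b ^^^ v) = 2^n*(b ^^^ v) + (a ^^^ u) := by omega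
  rw [h1, h2, h3, Nat.testBit_xor, Nat.testBit_two_pow_mul_add _ ha,
    Nat.testBit_two_pow_mul_add _ hu, Nat.testBit_two_pow_mul_add _ (Nat.xor_lt_two_pow ha hu)]
  rcases lt_or_ge j n with hj | hj
  · simp [hj, Nat.testBit_xor]
  · rw [if_neg (Nat.not_lt.mpr hj), if_neg (Nat.not_lt.mpr hj), if_neg (Nat.not_lt.mpr hj),
      Nat.testBit_xor]

lemma flip_low {n a b u : ℕ} (ha : a < 2^n) (hu : u < 2^n) :
    (a + 2^n*b) ^^^ u = (a ^^^ u) + 2^n * b := by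
  have h := block_xor (n := n) (a := a) (u := u) b 0 ha hu
  simpa using h

lemma flip_bit_n {n a b : ℕ} (ha : a < 2^n) :
    (a + 2^n * b) ^^^ 2^n = a + 2^n * (b ^^^ 1) := by
  have h := block_xor (n := n) (a := a) (u := 0) b 1 ha (Nat.two_pow_pos n)
  simpa using h

lemma flip_bit_n1 {n a b : ℕ} (ha : a < 2^n) :
    (a + 2^n * b) ^^^ 2^(n+1) = a + 2^n * (b ^^^ 2) := by
  have h := block_xor (n := n) (a := a) (u := 0) b 2 ha (Nat.two_pow_pos n)
  rw [zero_add] at h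
  rw [show (2:ℕ)^n * 2 = 2^(n+1) from by rw [pow_succ]] at h
  simpa using h

lemma flip_all4 {n a b : ℕ} (ha : a < 2^n) (hb : b < 4) :
    (a + 2^n*b) ^^^ (2^(n+2) - 1) = (2^n - 1 - a) + 2^n * (3 - b) := by
  have hpos := Nat.two_pow_pos n
  have h := block_xor (n := n) (a := a) (u := 2^n - 1) b 3 ha (by omega)
  have h4 : (2:ℕ)^(n+2) = 4 * 2^n := by rw [pow_add]; ring
  rw [show (2:ℕ)^n - 1 + 2^n * 3 = 2^(n+2) - 1 from by omega, xor_all_ones ha] at h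
  rw [h]
  congr 2
  interval_cases b <;> rfl

/-! ### quad evaluation -/

lemma finSum_symm {m : ℕ} (k : Fin (m + m)) :
    finSumFinEquiv.symm k =
      if h : (k:ℕ) < m then Sum.inl ⟨k, h⟩
      else Sum.inr ⟨(k:ℕ) - m, by have := k.2; omega⟩ := by
  split
  · rw [Equiv.symm_apply_eq, finSumFinEquiv_apply_left]
    exact Fin.ext rfl
  · rw [Equiv.symm_apply_eq, finSumFinEquiv_apply_right]
    exact Fin.ext (by simp; omega)

section quadeq
variable {n : ℕ} (c₁ c₂ c₃ c₄ : Fin (2^n) → ZMod 2) (p : Fin (2^(n+2))) (r : Fin (2^n))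

lemma quad_eq0 (h : (p:ℕ) = (r:ℕ)) : quad n c₁ c₂ c₃ c₄ p = c₁ r := by
  have hpow : (2:ℕ)^(n+1) = 2^n + 2^n := pow2succ n
  have hr := r.2
  unfold quad
  rw [finSum_symm]
  split <;> rename_i h1 <;> simp only [Fin.coe_cast, Fin.val_mk] at h1 <;>
    simp only [Sum.map_inl, Sum.map_inr, Sum.elim_inl, Sum.elim_inr]
  · rw [finSum_symm]
    split <;> rename_i h2 <;> simp only [Fin.coe_cast, Fin.val_mk] at h2 <;>
      simp only [Sum.elim_inl, Sum.elim_inr]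
    · congr 1
      exact Fin.ext (by simp only [Fin.coe_cast, Fin.val_mk]; omega)
    · exfalso; omega
  · exfalso; omega

lemma quad_eq1 (h : (p:ℕ) = (r:ℕ) + 2^n) : quad n c₁ c₂ c₃ c₄ p = c₂ r := by
  have hpow : (2:ℕ)^(n+1) = 2^n + 2^n := pow2succ n
  have hr := r.2
  unfold quad
  rw [finSum_symm]
  split <;> rename_i h1 <;> simp only [Fin.coe_cast, Fin.val_mk] at h1 <;>
    simp only [Sum.map_inl, Sum.map_inr, Sum.elim_inl, Sum.elim_inr]
  · rw [finSum_symm]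
    split <;> rename_i h2 <;> simp only [Fin.coe_cast, Fin.val_mk] at h2 <;>
      simp only [Sum.elim_inl, Sum.elim_inr]
    · exfalso; omega
    · congr 1
      exact Fin.ext (by simp only [Fin.coe_cast, Fin.val_mk]; omega)
  · exfalso; omega

lemma quad_eq2 (h : (p:ℕ) = (r:ℕ) + 2^n * 2) : quad n c₁ c₂ c₃ c₄ p = c₃ r := by
  have hpow : (2:ℕ)^(n+1) = 2^n + 2^n := pow2succ n
  have hr := r.2
  unfold quad
  rw [finSum_symm]
  split <;> rename_i h1 <;> simp only [Fin.coe_cast, Fin.val_mk] at h1 <;>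
    simp only [Sum.map_inl, Sum.map_inr, Sum.elim_inl, Sum.elim_inr]
  · exfalso; omega
  · rw [finSum_symm]
    split <;> rename_i h2 <;> simp only [Fin.coe_cast, Fin.val_mk] at h2 <;>
      simp only [Sum.elim_inl, Sum.elim_inr]
    · congr 1
      exact Fin.ext (by simp only [Fin.coe_cast, Fin.val_mk]; omega)
    · exfalso; omega

lemma quad_eq3 (h : (p:ℕ) = (r:ℕ) + 2^n * 3) : quad n c₁ c₂ c₃ c₄ p = c₄ r := by
  have hpow : (2:ℕ)^(n+1) = 2^n + 2^n := pow2succ n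
  have hr := r.2
  unfold quad
  rw [finSum_symm]
  split <;> rename_i h1 <;> simp only [Fin.coe_cast, Fin.val_mk] at h1 <;>
    simp only [Sum.map_inl, Sum.map_inr, Sum.elim_inl, Sum.elim_inr]
  · exfalso; omega
  · rw [finSum_symm]
    split <;> rename_i h2 <;> simp only [Fin.coe_cast, Fin.val_mk] at h2 <;>
      simp only [Sum.elim_inl, Sum.elim_inr]
    · exfalso; omega
    · congr 1
      exact Fin.ext (by simp only [Fin.coe_cast, Fin.val_mk]; omega)

end quadeq

lemma zsolve (M S T : ZMod 2) (h : M = S + T) : S = M + T := by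
  revert h; revert M S T; decide

lemma main0 (n : ℕ) (hn : 2 ≤ n) (c₁ c₂ c₃ c₄ : Fin (2^n) → ZMod 2)
    (p : Fin (2^(n+2))) (r : Fin (2^n)) (hp : (p:ℕ) = (r:ℕ) + 2^n * 0) :
    (cayM (n+2)).mulVec (quad n c₁ c₂ c₃ c₄) p
      = (cayM n).mulVec c₁ r + (antiJ (2^n)).mulVec c₁ r + c₂ r + c₃ r
        + (antiJ (2^n)).mulVec c₄ r := by
  have hr := r.2
  have hpos := Nat.two_pow_pos n
  have h4 : (2:ℕ)^(n+2) = 4 * 2^n := by rw [pow_add]; ring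
  have hxall : ∀ i : Fin n, (r:ℕ) ^^^ 2^(i:ℕ) < 2^n :=
    fun i => Nat.xor_lt_two_pow r.2 (two_pow_coe_lt i)
  have hcl : 2^n - 1 - (r:ℕ) < 2^n := by omega
  have L : (cayM (n+2)).mulVec (quad n c₁ c₂ c₃ c₄) p
      = (∑ i : Fin n, c₁ ⟨(r:ℕ) ^^^ 2^(i:ℕ), hxall i⟩) + c₂ r + c₃ r
        + c₄ ⟨2^n - 1 - (r:ℕ), hcl⟩ := by
    rw [cayM_mulVec (by omega) _ p, Fin.sum_univ_castSucc, Fin.sum_univ_castSucc]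
    congr 1
    · congr 1
      · congr 1
        · apply Finset.sum_congr rfl
          intro i _
          apply quad_eq0
          simp only [Fin.coe_castSucc, Fin.val_mk]
          rw [hp]
          exact flip_low hr (two_pow_coe_lt i)
        · apply quad_eq1
          simp only [Fin.coe_castSucc, Fin.val_last, Fin.val_mk]
          rw [hp]
          simpa using flip_bit_n (b := 0) hr
      · apply quad_eq2
        simp only [Fin.val_last, Fin.val_mk]
        rw [hp]
        simpa using flip_bit_n1 (b := 0) hr
    · apply quad_eq3
      simp only [Fin.val_mk]
      rw [hp]
      simpa using flip_all4 (b := 0) hr (by omega)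
  rw [L]
  have hJ1 : (antiJ (2^n)).mulVec c₁ r = c₁ ⟨2^n - 1 - (r:ℕ), hcl⟩ := antiJ_mulVec c₁ r
  have hJ4 : (antiJ (2^n)).mulVec c₄ r = c₄ ⟨2^n - 1 - (r:ℕ), hcl⟩ := antiJ_mulVec c₄ r
  have hS : (∑ i : Fin n, c₁ ⟨(r:ℕ) ^^^ 2^(i:ℕ), hxall i⟩)
      = (cayM n).mulVec c₁ r + c₁ ⟨2^n - 1 - (r:ℕ), hcl⟩ := by
    have hM := cayM_mulVec hn c₁ r
    have hcc : c₁ ⟨(r:ℕ) ^^^ (2^n - 1),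
        Nat.xor_lt_two_pow r.2 (by have := Nat.two_pow_pos n; omega)⟩
        = c₁ ⟨2^n - 1 - (r:ℕ), hcl⟩ := by
      congr 1
      exact Fin.ext (by simp only [Fin.val_mk]; exact xor_all_ones hr)
    rw [hcc] at hM
    exact zsolve _ _ _ hM
  rw [hS, ← hJ1, ← hJ4]

lemma main1 (n : ℕ) (hn : 2 ≤ n) (c₁ c₂ c₃ c₄ : Fin (2^n) → ZMod 2)
    (p : Fin (2^(n+2))) (r : Fin (2^n)) (hp : (p:ℕ) = (r:ℕ) + 2^n * 1) :
    (cayM (n+2)).mulVec (quad n c₁ c₂ c₃ c₄) p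
      = c₁ r + (cayM n).mulVec c₂ r + (antiJ (2^n)).mulVec c₂ r
        + (antiJ (2^n)).mulVec c₃ r + c₄ r := by
  have hr := r.2
  have hpos := Nat.two_pow_pos n
  have h4 : (2:ℕ)^(n+2) = 4 * 2^n := by rw [pow_add]; ring
  have hxall : ∀ i : Fin n, (r:ℕ) ^^^ 2^(i:ℕ) < 2^n :=
    fun i => Nat.xor_lt_two_pow r.2 (two_pow_coe_lt i)
  have hcl : 2^n - 1 - (r:ℕ) < 2^n := by omega
  have L : (cayM (n+2)).mulVec (quad n c₁ c₂ c₃ c₄) p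
      = (∑ i : Fin n, c₂ ⟨(r:ℕ) ^^^ 2^(i:ℕ), hxall i⟩) + c₁ r + c₄ r
        + c₃ ⟨2^n - 1 - (r:ℕ), hcl⟩ := by
    rw [cayM_mulVec (by omega) _ p, Fin.sum_univ_castSucc, Fin.sum_univ_castSucc]
    congr 1
    · congr 1
      · congr 1
        · apply Finset.sum_congr rfl
          intro i _
          apply quad_eq1
          simp only [Fin.coe_castSucc, Fin.val_mk]
          rw [hp]
          simpa using flip_low (b := 1) hr (two_pow_coe_lt i)
        · apply quad_eq0
          simp only [Fin.coe_castSucc, Fin.val_last, Fin.val_mk]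
          rw [hp]
          simpa using flip_bit_n (b := 1) hr
      · apply quad_eq3
        simp only [Fin.val_last, Fin.val_mk]
        rw [hp]
        simpa using flip_bit_n1 (b := 1) hr
    · apply quad_eq2
      simp only [Fin.val_mk]
      rw [hp]
      simpa using flip_all4 (b := 1) hr (by omega)
  rw [L]
  have hJ2 : (antiJ (2^n)).mulVec c₂ r = c₂ ⟨2^n - 1 - (r:ℕ), hcl⟩ := antiJ_mulVec c₂ r
  have hJ3 : (antiJ (2^n)).mulVec c₃ r = c₃ ⟨2^n - 1 - (r:ℕ), hcl⟩ := antiJ_mulVec c₃ r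
  have hS : (∑ i : Fin n, c₂ ⟨(r:ℕ) ^^^ 2^(i:ℕ), hxall i⟩)
      = (cayM n).mulVec c₂ r + c₂ ⟨2^n - 1 - (r:ℕ), hcl⟩ := by
    have hM := cayM_mulVec hn c₂ r
    have hcc : c₂ ⟨(r:ℕ) ^^^ (2^n - 1),
        Nat.xor_lt_two_pow r.2 (by have := Nat.two_pow_pos n; omega)⟩
        = c₂ ⟨2^n - 1 - (r:ℕ), hcl⟩ := by
      congr 1
      exact Fin.ext (by simp only [Fin.val_mk]; exact xor_all_ones hr)
    rw [hcc] at hM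
    exact zsolve _ _ _ hM
  rw [hS, ← hJ2, ← hJ3]
  ring

lemma main2 (n : ℕ) (hn : 2 ≤ n) (c₁ c₂ c₃ c₄ : Fin (2^n) → ZMod 2)
    (p : Fin (2^(n+2))) (r : Fin (2^n)) (hp : (p:ℕ) = (r:ℕ) + 2^n * 2) :
    (cayM (n+2)).mulVec (quad n c₁ c₂ c₃ c₄) p
      = c₁ r + (antiJ (2^n)).mulVec c₂ r + (cayM n).mulVec c₃ r
        + (antiJ (2^n)).mulVec c₃ r + c₄ r := by
  have hr := r.2
  have hpos := Nat.two_pow_pos n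
  have h4 : (2:ℕ)^(n+2) = 4 * 2^n := by rw [pow_add]; ring
  have hxall : ∀ i : Fin n, (r:ℕ) ^^^ 2^(i:ℕ) < 2^n :=
    fun i => Nat.xor_lt_two_pow r.2 (two_pow_coe_lt i)
  have hcl : 2^n - 1 - (r:ℕ) < 2^n := by omega
  have L : (cayM (n+2)).mulVec (quad n c₁ c₂ c₃ c₄) p
      = (∑ i : Fin n, c₃ ⟨(r:ℕ) ^^^ 2^(i:ℕ), hxall i⟩) + c₄ r + c₁ r
        + c₂ ⟨2^n - 1 - (r:ℕ), hcl⟩ := by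
    rw [cayM_mulVec (by omega) _ p, Fin.sum_univ_castSucc, Fin.sum_univ_castSucc]
    congr 1
    · congr 1
      · congr 1
        · apply Finset.sum_congr rfl
          intro i _
          apply quad_eq2
          simp only [Fin.coe_castSucc, Fin.val_mk]
          rw [hp]
          simpa using flip_low (b := 2) hr (two_pow_coe_lt i)
        · apply quad_eq3
          simp only [Fin.coe_castSucc, Fin.val_last, Fin.val_mk]
          rw [hp]
          simpa using flip_bit_n (b := 2) hr
      · apply quad_eq0
        simp only [Fin.val_last, Fin.val_mk]
        rw [hp]
        simpa using flip_bit_n1 (b := 2) hr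
    · apply quad_eq1
      simp only [Fin.val_mk]
      rw [hp]
      simpa using flip_all4 (b := 2) hr (by omega)
  rw [L]
  have hJ2 : (antiJ (2^n)).mulVec c₂ r = c₂ ⟨2^n - 1 - (r:ℕ), hcl⟩ := antiJ_mulVec c₂ r
  have hS : (∑ i : Fin n, c₃ ⟨(r:ℕ) ^^^ 2^(i:ℕ), hxall i⟩)
      = (cayM n).mulVec c₃ r + (antiJ (2^n)).mulVec c₃ r := by
    have hM := cayM_mulVec hn c₃ r
    have hcc : c₃ ⟨(r:ℕ) ^^^ (2^n - 1),
        Nat.xor_lt_two_pow r.2 (by have := Nat.two_pow_pos n; omega)⟩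
        = c₃ ⟨2^n - 1 - (r:ℕ), hcl⟩ := by
      congr 1
      exact Fin.ext (by simp only [Fin.val_mk]; exact xor_all_ones hr)
    rw [hcc] at hM
    rw [antiJ_mulVec c₃ r]
    exact zsolve _ _ _ hM
  rw [hS, ← hJ2]
  ring

lemma main3 (n : ℕ) (hn : 2 ≤ n) (c₁ c₂ c₃ c₄ : Fin (2^n) → ZMod 2)
    (p : Fin (2^(n+2))) (r : Fin (2^n)) (hp : (p:ℕ) = (r:ℕ) + 2^n * 3) :
    (cayM (n+2)).mulVec (quad n c₁ c₂ c₃ c₄) p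
      = (antiJ (2^n)).mulVec c₁ r + c₂ r + c₃ r + (cayM n).mulVec c₄ r
        + (antiJ (2^n)).mulVec c₄ r := by
  have hr := r.2
  have hpos := Nat.two_pow_pos n
  have h4 : (2:ℕ)^(n+2) = 4 * 2^n := by rw [pow_add]; ring
  have hxall : ∀ i : Fin n, (r:ℕ) ^^^ 2^(i:ℕ) < 2^n :=
    fun i => Nat.xor_lt_two_pow r.2 (two_pow_coe_lt i)
  have hcl : 2^n - 1 - (r:ℕ) < 2^n := by omega
  have L : (cayM (n+2)).mulVec (quad n c₁ c₂ c₃ c₄) p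
      = (∑ i : Fin n, c₄ ⟨(r:ℕ) ^^^ 2^(i:ℕ), hxall i⟩) + c₃ r + c₂ r
        + c₁ ⟨2^n - 1 - (r:ℕ), hcl⟩ := by
    rw [cayM_mulVec (by omega) _ p, Fin.sum_univ_castSucc, Fin.sum_univ_castSucc]
    congr 1
    · congr 1
      · congr 1
        · apply Finset.sum_congr rfl
          intro i _
          apply quad_eq3
          simp only [Fin.coe_castSucc, Fin.val_mk]
          rw [hp]
          simpa using flip_low (b := 3) hr (two_pow_coe_lt i)
        · apply quad_eq2
          simp only [Fin.coe_castSucc, Fin.val_last, Fin.val_mk]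
          rw [hp]
          simpa using flip_bit_n (b := 3) hr
      · apply quad_eq1
        simp only [Fin.val_last, Fin.val_mk]
        rw [hp]
        simpa using flip_bit_n1 (b := 3) hr
    · apply quad_eq0
      simp only [Fin.val_mk]
      rw [hp]
      simpa using flip_all4 (b := 3) hr (by omega)
  rw [L]
  have hJ1 : (antiJ (2^n)).mulVec c₁ r = c₁ ⟨2^n - 1 - (r:ℕ), hcl⟩ := antiJ_mulVec c₁ r
  have hS : (∑ i : Fin n, c₄ ⟨(r:ℕ) ^^^ 2^(i:ℕ), hxall i⟩)
      = (cayM n).mulVec c₄ r + (antiJ (2^n)).mulVec c₄ r := by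
    have hM := cayM_mulVec hn c₄ r
    have hcc : c₄ ⟨(r:ℕ) ^^^ (2^n - 1),
        Nat.xor_lt_two_pow r.2 (by have := Nat.two_pow_pos n; omega)⟩
        = c₄ ⟨2^n - 1 - (r:ℕ), hcl⟩ := by
      congr 1
      exact Fin.ext (by simp only [Fin.val_mk]; exact xor_all_ones hr)
    rw [hcc] at hM
    rw [antiJ_mulVec c₄ r]
    exact zsolve _ _ _ hM
  rw [hS, ← hJ1]
  ring

lemma zf1 : ∀ m1 j1 b c j4 m4 : ZMod 2,
    m1 + j1 + b + c + j4 = 0 → j1 + b + c + m4 + j4 = 0 → m1 + m4 = 0 := by decide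
lemma zf2 : ∀ a m2 j2 j3 d m3 : ZMod 2,
    a + m2 + j2 + j3 + d = 0 → a + j2 + m3 + j3 + d = 0 → m2 + m3 = 0 := by decide
lemma zf3 : ∀ a b : ZMod 2, b = a + (a + b) := by decide
lemma zf5 : ∀ m1 j1 b c j4 : ZMod 2,
    m1 + j1 + b + c + j4 = 0 → m1 = (b + c) + (j1 + j4) := by decide
lemma zf6 : ∀ a m2 j2 j3 d : ZMod 2,
    a + m2 + j2 + j3 + d = 0 → m2 = (a + d) + (j2 + j3) := by decide
lemma zb0 : ∀ a b c d : ZMod 2, (a + b) + c + d + (d + a) + (c + b) = 0 := by decide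
lemma zb1 : ∀ x a b j : ZMod 2, x + (a + b) + j + (j + b) + (x + a) = 0 := by decide
lemma zb2 : ∀ x j a b : ZMod 2, x + j + ((a + b) + 0) + (j + b) + (x + a) = 0 := by decide
lemma zb3 : ∀ j x a b : ZMod 2, j + x + (x + a) + ((a + b) + 0) + (j + b) = 0 := by decide

/-- for `n ≥ 3`, a vector `c = (c₁,c₂,c₃,c₄) ∈ F₂^(2^(n+2))` is in
`ker M_{n+2}` iff there are `d₁, d₂ ∈ ker Mₙ` with `c₄ = c₁ + d₁`, `c₃ = c₂ + d₂`,
`Mₙ c₁ = d₂ + J d₁` and `Mₙ c₂ = d₁ + J d₂`. -/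
theorem stmt17 (n : ℕ) (hn : 3 ≤ n) (c₁ c₂ c₃ c₄ : Fin (2 ^ n) → ZMod 2) :
    (cayM (n + 2)).mulVec (quad n c₁ c₂ c₃ c₄) = 0 ↔
      ∃ d₁ d₂ : Fin (2 ^ n) → ZMod 2,
        (cayM n).mulVec d₁ = 0 ∧ (cayM n).mulVec d₂ = 0 ∧
        c₄ = c₁ + d₁ ∧ c₃ = c₂ + d₂ ∧
        (cayM n).mulVec c₁ = d₂ + (antiJ (2 ^ n)).mulVec d₁ ∧
        (cayM n).mulVec c₂ = d₁ + (antiJ (2 ^ n)).mulVec d₂ := by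
  have hn2 : 2 ≤ n := by omega
  have hpos := Nat.two_pow_pos n
  have h4 : (2:ℕ)^(n+2) = 4 * 2^n := by rw [pow_add]; ring
  constructor
  · intro H
    have h1 : ∀ r : Fin (2^n), (cayM n).mulVec c₁ r + (antiJ (2^n)).mulVec c₁ r
        + c₂ r + c₃ r + (antiJ (2^n)).mulVec c₄ r = 0 := by
      intro r
      have hr := r.2
      have h := congrFun H ⟨(r:ℕ) + 2^n * 0, by omega⟩
      rw [main0 n hn2 c₁ c₂ c₃ c₄ _ r rfl] at h
      simpa using h
    have h2 : ∀ r : Fin (2^n), c₁ r + (cayM n).mulVec c₂ r + (antiJ (2^n)).mulVec c₂ r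
        + (antiJ (2^n)).mulVec c₃ r + c₄ r = 0 := by
      intro r
      have hr := r.2
      have h := congrFun H ⟨(r:ℕ) + 2^n * 1, by omega⟩
      rw [main1 n hn2 c₁ c₂ c₃ c₄ _ r rfl] at h
      simpa using h
    have h3 : ∀ r : Fin (2^n), c₁ r + (antiJ (2^n)).mulVec c₂ r + (cayM n).mulVec c₃ r
        + (antiJ (2^n)).mulVec c₃ r + c₄ r = 0 := by
      intro r
      have hr := r.2
      have h := congrFun H ⟨(r:ℕ) + 2^n * 2, by omega⟩
      rw [main2 n hn2 c₁ c₂ c₃ c₄ _ r rfl] at h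
      simpa using h
    have h4' : ∀ r : Fin (2^n), (antiJ (2^n)).mulVec c₁ r + c₂ r + c₃ r
        + (cayM n).mulVec c₄ r + (antiJ (2^n)).mulVec c₄ r = 0 := by
      intro r
      have hr := r.2
      have h := congrFun H ⟨(r:ℕ) + 2^n * 3, by omega⟩
      rw [main3 n hn2 c₁ c₂ c₃ c₄ _ r rfl] at h
      simpa using h
    refine ⟨c₁ + c₄, c₂ + c₃, ?_, ?_, ?_, ?_, ?_, ?_⟩
    · rw [Matrix.mulVec_add]
      funext r
      simp only [Pi.add_apply, Pi.zero_apply]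
      exact zf1 _ _ _ _ _ _ (h1 r) (h4' r)
    · rw [Matrix.mulVec_add]
      funext r
      simp only [Pi.add_apply, Pi.zero_apply]
      exact zf2 _ _ _ _ _ _ (h2 r) (h3 r)
    · funext r
      simp only [Pi.add_apply]
      exact zf3 _ _
    · funext r
      simp only [Pi.add_apply]
      exact zf3 _ _
    · rw [Matrix.mulVec_add]
      funext r
      simp only [Pi.add_apply]
      exact zf5 _ _ _ _ _ (h1 r)
    · rw [Matrix.mulVec_add]
      funext r
      simp only [Pi.add_apply]
      exact zf6 _ _ _ _ _ (h2 r)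
  · rintro ⟨d₁, d₂, hd1, hd2, hc4, hc3, g1, g2⟩
    funext p
    simp only [Pi.zero_apply]
    have hm : (p:ℕ) % 2^n < 2^n := Nat.mod_lt _ hpos
    set r : Fin (2^n) := ⟨(p:ℕ) % 2^n, hm⟩ with hrdef
    have hrv : (r:ℕ) = (p:ℕ) % 2^n := rfl
    have hdm : (p:ℕ) % 2^n + 2^n * ((p:ℕ) / 2^n) = (p:ℕ) := Nat.mod_add_div _ _
    have hblt : (p:ℕ) / 2^n < 4 := by
      rw [Nat.div_lt_iff_lt_mul hpos]
      have := p.2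
      omega
    obtain ⟨b, hb, hp⟩ : ∃ b, b < 4 ∧ (p:ℕ) = (r:ℕ) + 2^n * b :=
      ⟨(p:ℕ)/2^n, hblt, by rw [hrv]; exact hdm.symm⟩
    interval_cases b
    · rw [main0 n hn2 c₁ c₂ c₃ c₄ p r hp]
      have A : (cayM n).mulVec c₁ r = d₂ r + (antiJ (2^n)).mulVec d₁ r := by
        have := congrFun g1 r; simpa using this
      have B : (antiJ (2^n)).mulVec c₄ r
          = (antiJ (2^n)).mulVec c₁ r + (antiJ (2^n)).mulVec d₁ r := by
        rw [hc4, Matrix.mulVec_add]; rfl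
      have C : c₃ r = c₂ r + d₂ r := by rw [hc3]; rfl
      rw [A, B, C]
      exact zb0 _ _ _ _
    · rw [main1 n hn2 c₁ c₂ c₃ c₄ p r hp]
      have A : (cayM n).mulVec c₂ r = d₁ r + (antiJ (2^n)).mulVec d₂ r := by
        have := congrFun g2 r; simpa using this
      have B : (antiJ (2^n)).mulVec c₃ r
          = (antiJ (2^n)).mulVec c₂ r + (antiJ (2^n)).mulVec d₂ r := by
        rw [hc3, Matrix.mulVec_add]; rfl
      have C : c₄ r = c₁ r + d₁ r := by rw [hc4]; rfl
      rw [A, B, C]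
      exact zb1 _ _ _ _
    · rw [main2 n hn2 c₁ c₂ c₃ c₄ p r hp]
      have A : (cayM n).mulVec c₃ r = (d₁ r + (antiJ (2^n)).mulVec d₂ r) + 0 := by
        rw [hc3, Matrix.mulVec_add]
        show (cayM n).mulVec c₂ r + (cayM n).mulVec d₂ r = _
        rw [show (cayM n).mulVec c₂ r = d₁ r + (antiJ (2^n)).mulVec d₂ r from by
              have := congrFun g2 r; simpa using this,
            show (cayM n).mulVec d₂ r = 0 from by
              have := congrFun hd2 r; simpa using this]
      have B : (antiJ (2^n)).mulVec c₃ r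
          = (antiJ (2^n)).mulVec c₂ r + (antiJ (2^n)).mulVec d₂ r := by
        rw [hc3, Matrix.mulVec_add]; rfl
      have C : c₄ r = c₁ r + d₁ r := by rw [hc4]; rfl
      rw [A, B, C]
      exact zb2 _ _ _ _
    · rw [main3 n hn2 c₁ c₂ c₃ c₄ p r hp]
      have A : (cayM n).mulVec c₄ r = (d₂ r + (antiJ (2^n)).mulVec d₁ r) + 0 := by
        rw [hc4, Matrix.mulVec_add]
        show (cayM n).mulVec c₁ r + (cayM n).mulVec d₁ r = _
        rw [show (cayM n).mulVec c₁ r = d₂ r + (antiJ (2^n)).mulVec d₁ r from by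
              have := congrFun g1 r; simpa using this,
            show (cayM n).mulVec d₁ r = 0 from by
              have := congrFun hd1 r; simpa using this]
      have B : (antiJ (2^n)).mulVec c₄ r
          = (antiJ (2^n)).mulVec c₁ r + (antiJ (2^n)).mulVec d₁ r := by
        rw [hc4, Matrix.mulVec_add]; rfl
      have C : c₃ r = c₂ r + d₂ r := by rw [hc3]; rfl
      rw [A, B, C]
      exact zb3 _ _ _ _
end
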